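/- arXiv:1908.05406 — 7 statements merged into one kernel-verified Lean document; each statement's English description precedes it below -/
import Mathlib

section
/- Let X be a real Hilbert space, U a closed linear subspace of X, and C a nonempty closed convex subset of X. Then the projection of 0 onto the closure of the set U − C = {u − c : u ∈ U, c ∈ C} belongs to the orthogonal complement U^⊥. -/
open scoped RealInnerProductSpace Pointwise
open Filter Topology

noncomputable section

variable {X : Type*}

section Defs
variable [NormedAddCommGroup X] [InnerProductSpace ℝ X]

/-- `p` is the metric projection of `x` onto `S`: `p ∈ S` and
`⟪s − p, x − p⟫ ≤ 0` for all `s ∈ S`. -/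
def IsMetricProj (S : Set X) (x p : X) : Prop :=
  p ∈ S ∧ ∀ s ∈ S, ⟪s - p, x - p⟫ ≤ (0 : ℝ)

/-- a function `X → (−∞,+∞]` is proper: never `−∞` and somewhere finite. -/
def EProper (g : X → EReal) : Prop :=
  (∀ x, g x ≠ ⊥) ∧ ∃ x, g x ≠ ⊤

/-- convexity for extended-real-valued functions. -/
def EConvexOn (g : X → EReal) : Prop :=
  ∀ x y : X, ∀ a b : ℝ, 0 ≤ a → 0 ≤ b → a + b = 1 →
    g (a • x + b • y) ≤ (a : EReal) * g x + (b : EReal) * g y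

/-- the convex subdifferential `∂g(x)`. -/
def ESubdiff (g : X → EReal) (x : X) : Set X :=
  {xs | ∀ z : X, g x + ((⟪z - x, xs⟫ : ℝ) : EReal) ≤ g z}

/-- the Fenchel conjugate `g*`. -/
def EConj (g : X → EReal) (xs : X) : EReal :=
  ⨆ x : X, ((⟪x, xs⟫ : ℝ) : EReal) - g x

/-- `prox` is the proximal mapping of `g`: `prox x` minimizes
`y ↦ g y + ‖y − x‖²/2`. -/
def IsProx (g : X → EReal) (prox : X → X) : Prop :=
  ∀ x y : X,
    g (prox x) + ((‖prox x - x‖ ^ 2 / 2 : ℝ) : EReal) ≤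
      g y + ((‖y - x‖ ^ 2 / 2 : ℝ) : EReal)

/-- the normal cone operator of a closed linear subspace:
`N_U(x) = U^⊥` if `x ∈ U`, and `∅` otherwise. -/
def normalCone (U : Submodule ℝ X) (x : X) : Set X :=
  {u | x ∈ U ∧ u ∈ Uᗮ}

/-- `c` is a weak cluster point of the sequence `s`, i.e. the weak limit of a
subsequence of `s`. -/
def IsWeakClusterPt (s : ℕ → X) (c : X) : Prop :=
  ∃ φ : ℕ → ℕ, StrictMono φ ∧
    ∀ w : X, Tendsto (fun k => (⟪s (φ k), w⟫ : ℝ)) atTop (𝓝 ⟪c, w⟫)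

end Defs

theorem vadd_closure_subset_closure_of_vadd_subset {M α : Type*} [TopologicalSpace α] [VAdd M α]
    [ContinuousConstVAdd M α] {c : M} {s : Set α} (h : c +ᵥ s ⊆ s) :
    c +ᵥ closure s ⊆ closure s :=
  (vadd_closure_subset c s).trans (closure_mono h)

theorem Submodule.vadd_sub_subset {R M : Type*} [Ring R] [AddCommGroup M] [Module R M]
    (U : Submodule R M) (C : Set M) {u : M} (hu : u ∈ U) :
    u +ᵥ ((U : Set M) - C) ⊆ (U : Set M) - C := by
  rintro _ ⟨_, ⟨a, ha, c, hc, rfl⟩, rfl⟩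
  exact ⟨u + a, U.add_mem hu ha, c, hc, add_sub_assoc u a c⟩

theorem IsMetricProj.sub_mem_orthogonal [NormedAddCommGroup X] [InnerProductSpace ℝ X]
    {S : Set X} {x p : X} (hp : IsMetricProj S x p) (U : Submodule ℝ X)
    (hS : ∀ u ∈ U, u +ᵥ S ⊆ S) : x - p ∈ Uᗮ := by
  have inner_nonpos : ∀ u ∈ U, ⟪u, x - p⟫ ≤ 0 := fun u hu => by
    simpa using hp.2 (u + p) (hS u hu (Set.vadd_mem_vadd_set hp.1))
  refine (Submodule.mem_orthogonal U (x - p)).2 fun u hu => le_antisymm (inner_nonpos u hu) ?_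
  simpa [inner_neg_left] using inner_nonpos (-u) (U.neg_mem hu)

theorem proj_zero_closure_sub_mem_orthogonal_general
    [NormedAddCommGroup X] [InnerProductSpace ℝ X]
    (U : Submodule ℝ X)
    (C : Set X)
    (p : X) (hp : IsMetricProj (closure ((U : Set X) - C)) 0 p) :
    p ∈ Uᗮ := by
  have h_neg := hp.sub_mem_orthogonal U fun _ hu =>
    vadd_closure_subset_closure_of_vadd_subset (U.vadd_sub_subset C hu)
  simpa using h_neg

/-- If `X` is a real Hilbert space, `U` a closed linear subspace and
`C` a nonempty closed convex subset, then the projection of `0` onto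
`closure (U − C)` belongs to `U^⊥`. -/
theorem proj_zero_closure_sub_mem_orthogonal
    [NormedAddCommGroup X] [InnerProductSpace ℝ X] [CompleteSpace X]
    (U : Submodule ℝ X) (hUclosed : IsClosed (U : Set X))
    (C : Set X) (hCne : C.Nonempty) (hCclosed : IsClosed C) (hCconv : Convex ℝ C)
    (p : X) (hp : IsMetricProj (closure ((U : Set X) - C)) 0 p) :
    p ∈ Uᗮ :=
  proj_zero_closure_sub_mem_orthogonal_general U C p hp
end
end

section
/- Let X be a real Hilbert space, U a closed linear subspace of X, and let C₁, C₂ be nonempty closed convex subsets of X. Set S₁ = U − C₁ and S₂ = U^⊥ − C₂. Then P_{U^⊥}(closure S₁) ⊆ closure S₁ and P_U(closure S₂) ⊆ closure S₂, where P_U and P_{U^⊥} are the orthogonal projectors onto U and U^⊥. -/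
open scoped RealInnerProductSpace Pointwise
open Filter Topology

noncomputable section

variable {X : Type*}

namespace Submodule

variable {𝕜 E : Type*} [RCLike 𝕜] [NormedAddCommGroup E] [InnerProductSpace 𝕜 E]
  (K : Submodule 𝕜 E) [K.HasOrthogonalProjection] (C : Set E)

theorem starProjection_orthogonal_sub_of_mem {u : E} (hu : u ∈ K) (c : E) :
    Kᗮ.starProjection (u - c) = K.starProjection c - c := by
  rw [map_sub, starProjection_orthogonal_apply_eq_zero hu, starProjection_orthogonal_val]
  abel

theorem mapsTo_starProjection_orthogonal_sub :
    Set.MapsTo Kᗮ.starProjection ((K : Set E) - C) ((K : Set E) - C) := by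
  rintro _ ⟨u, hu, c, hc, rfl⟩
  exact ⟨K.starProjection c, K.starProjection_apply_mem c, c, hc,
    (K.starProjection_orthogonal_sub_of_mem hu c).symm⟩

theorem mapsTo_closure_starProjection_orthogonal_sub :
    Set.MapsTo Kᗮ.starProjection (closure ((K : Set E) - C)) (closure ((K : Set E) - C)) :=
  (K.mapsTo_starProjection_orthogonal_sub C).closure Kᗮ.starProjection.continuous

theorem mapsTo_closure_starProjection_sub_orthogonal :
    Set.MapsTo K.starProjection (closure ((Kᗮ : Set E) - C)) (closure ((Kᗮ : Set E) - C)) := by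
  simpa only [K.orthogonal_orthogonal] using Kᗮ.mapsTo_closure_starProjection_orthogonal_sub C

end Submodule

theorem proj_invariance_of_closures_general
    [NormedAddCommGroup X] [InnerProductSpace ℝ X]
    (U : Submodule ℝ X) [Submodule.HasOrthogonalProjection U]
    (C₁ : Set X)
    (C₂ : Set X) :
    (∀ y ∈ closure ((U : Set X) - C₁),
        ((Submodule.orthogonalProjectionOnto Uᗮ y : X)) ∈ closure ((U : Set X) - C₁)) ∧
    (∀ y ∈ closure ((Uᗮ : Set X) - C₂),
        ((Submodule.orthogonalProjectionOnto U y : X)) ∈ closure ((Uᗮ : Set X) - C₂)) :=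
  ⟨U.mapsTo_closure_starProjection_orthogonal_sub C₁,
    U.mapsTo_closure_starProjection_sub_orthogonal C₂⟩

/-- With `S₁ = U − C₁` and `S₂ = U^⊥ − C₂`, the closure of `S₁` is
invariant under `P_{U^⊥}` and the closure of `S₂` is invariant under `P_U`. -/
theorem proj_invariance_of_closures
    [NormedAddCommGroup X] [InnerProductSpace ℝ X] [CompleteSpace X]
    (U : Submodule ℝ X) (hUclosed : IsClosed (U : Set X)) [Submodule.HasOrthogonalProjection U]
    (C₁ : Set X) (hC₁ne : C₁.Nonempty) (hC₁closed : IsClosed C₁) (hC₁conv : Convex ℝ C₁)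
    (C₂ : Set X) (hC₂ne : C₂.Nonempty) (hC₂closed : IsClosed C₂) (hC₂conv : Convex ℝ C₂) :
    (∀ y ∈ closure ((U : Set X) - C₁),
        ((Submodule.orthogonalProjectionOnto Uᗮ y : X)) ∈ closure ((U : Set X) - C₁)) ∧
    (∀ y ∈ closure ((Uᗮ : Set X) - C₂),
        ((Submodule.orthogonalProjectionOnto U y : X)) ∈ closure ((Uᗮ : Set X) - C₂)) :=
  proj_invariance_of_closures_general U C₁ C₂
end
end

section
/- Let X be a finite-dimensional real inner product space, U a linear subspace of X, and g : X → (−∞,+∞] proper, convex, and lower semicontinuous. Assume the constraint qualification 0 ∈ U^⊥ + dom g*, where g* is the Fenchel conjugate of g. Let T = Id − P_U + Prox_g ∘ R_U be the Douglas–Rachford operator and v = P_{closure(ran(Id − T))}(0) the minimal displacement vector. Then v = P_{closure(U − dom g)}(0); in particular v ∈ U^⊥. -/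
open scoped RealInnerProductSpace Pointwise
open Filter Topology

noncomputable section

variable {X : Type*}

/-! The displacements `z - T z = P_U x - Prox_g x` (with `x = R_U z`) lie in `U - dom g`, so it is
enough to find, for every `y ∈ dom g` and `ε > 0`, a displacement of norm at most
`‖y - P_U y‖ + ε`: then `v` has minimal norm in the convex set `closure (U - dom g)`, and since
this set is invariant under translation by `U`, also `v ∈ U^⊥`.

Such a displacement comes from a minimizer `p` of
`g + ‖P_{U^⊥} (· - y)‖² / (2μ) + μ ‖P_U (· - y)‖² / 2`. Its optimality condition is a subgradient
`q ∈ ∂g(p)`, so that `Prox_g (p + q) = p` and `P_U (p + q) - p = -(y - P_U y) - e` with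
`e = P_{U^⊥} (p - y) + μ P_U (p - y)`. The constraint qualification gives an affine minorant
`⟪·, w⟫ - G ≤ g` with `w ∈ U^⊥`, and comparing the values at `p` and `y` yields
`‖e‖² ≤ μ (a + b ‖e‖)` for constants `a, b`, so `‖e‖ → 0` as `μ → 0`. -/

lemma eventually_forall_sq_le_mul_add (a b : ℝ) {ε : ℝ} (hε : 0 < ε) :
    ∀ᶠ c in 𝓝 (0 : ℝ), ∀ s : ℝ, s ^ 2 ≤ c * (a + b * s) → s ≤ ε := by
  have hcont (k : ℝ) : Tendsto (fun c : ℝ => |c| * k) (𝓝 0) (𝓝 0) :=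
    (continuous_abs.mul continuous_const).tendsto' _ _ (by simp)
  filter_upwards [(hcont |a|).eventually_lt_const (by positivity : (0 : ℝ) < ε ^ 2 / 2),
    (hcont |b|).eventually_lt_const (half_pos hε)] with c hca hcb s hs
  by_contra! hεs
  have hla : c * a ≤ |c| * |a| := abs_mul c a ▸ le_abs_self _
  have hlb : c * b * s ≤ |c| * |b| * s :=
    mul_le_mul_of_nonneg_right (abs_mul c b ▸ le_abs_self _) (by linarith)
  nlinarith

lemma LowerSemicontinuous.exists_forall_le_of_isBounded {α β : Type*} [PseudoMetricSpace α]
    [ProperSpace α] [LinearOrder β] [TopologicalSpace β] [OrderClosedTopology β] {F : α → β}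
    (hF : LowerSemicontinuous F) {y : α} (hbdd : Bornology.IsBounded {x | F x ≤ F y}) :
    ∃ p, ∀ x, F p ≤ F x := by
  have hy : F y ≤ F y := le_rfl
  have hK : IsCompact {x | F x ≤ F y} :=
    Metric.isCompact_of_isClosed_isBounded (hF.isClosed_preimage (F y)) hbdd
  obtain ⟨p, -, hp⟩ :=
    LowerSemicontinuousOn.exists_isMinOn ⟨y, hy⟩ hK (hF.lowerSemicontinuousOn _)
  refine ⟨p, fun x => ?_⟩
  by_cases hx : F x ≤ F y
  · exact hp hx
  · exact (hp hy).trans (le_of_not_ge hx)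

section MetricProjection

variable [NormedAddCommGroup X] [InnerProductSpace ℝ X] {K : Set X} {p : X}

lemma IsMetricProj.norm_le (hp : IsMetricProj K 0 p) {s : X} (hs : s ∈ K) : ‖p‖ ≤ ‖s‖ := by
  have h := hp.2 s hs
  rw [zero_sub, inner_neg_right, inner_sub_left, real_inner_self_eq_norm_sq, neg_nonpos,
    sub_nonneg] at h
  nlinarith [real_inner_le_norm s p, norm_nonneg p, norm_nonneg s]

lemma isMetricProj_zero_of_forall_norm_le (hK : Convex ℝ K) (hp : p ∈ K)
    (h : ∀ s ∈ K, ‖p‖ ≤ ‖s‖) : IsMetricProj K 0 p := by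
  have : Nonempty K := ⟨⟨p, hp⟩⟩
  have hbdd : BddBelow (Set.range fun s : K => ‖0 - (s : X)‖) :=
    ⟨0, by rintro _ ⟨s, rfl⟩; positivity⟩
  have hinf : ‖0 - p‖ = ⨅ s : K, ‖0 - (s : X)‖ :=
    le_antisymm (le_ciInf fun s => by simpa using h s s.2) (ciInf_le hbdd ⟨p, hp⟩)
  refine ⟨hp, fun s hs => ?_⟩
  rw [real_inner_comm]
  exact (norm_eq_iInf_iff_real_inner_le_zero hK hp).1 hinf s hs

lemma IsMetricProj.mem_orthogonal {U : Submodule ℝ X} (hp : IsMetricProj K 0 p)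
    (hK : ∀ u ∈ U, ∀ s ∈ K, u + s ∈ K) : p ∈ Uᗮ := by
  have key : ∀ u ∈ U, 0 ≤ ⟪u, p⟫ := fun u hu => by
    simpa using hp.2 _ (hK u hu p hp.1)
  refine (Submodule.mem_orthogonal U p).2 fun u hu => le_antisymm ?_ (key u hu)
  simpa using key (-u) (U.neg_mem hu)

lemma add_mem_closure_submodule_sub {U : Submodule ℝ X} {A : Set X} {u s : X} (hu : u ∈ U)
    (hs : s ∈ closure ((U : Set X) - A)) : u + s ∈ closure ((U : Set X) - A) :=
  map_mem_closure (continuous_const_add u) hs <| by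
    rintro _ ⟨u', hu', a, ha, rfl⟩
    exact ⟨u + u', U.add_mem hu hu', a, ha, add_sub_assoc u u' a⟩

end MetricProjection

section ExtendedConvexAnalysis

variable [NormedAddCommGroup X] {g : X → EReal} {prox : X → X}

lemma IsProx.apply_ne_top (hprox : IsProx g prox) (hdom : ∃ x, g x ≠ ⊤) (x : X) :
    g (prox x) ≠ ⊤ := by
  obtain ⟨x₀, hx₀⟩ := hdom
  intro htop
  have h := hprox x x₀
  rw [htop, EReal.top_add_coe, top_le_iff] at h
  exact EReal.add_ne_top hx₀ (EReal.coe_ne_top _) h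

variable [InnerProductSpace ℝ X]

lemma EConvexOn.convex_dom (hg : EConvexOn g) : Convex ℝ {x | g x ≠ ⊤} := by
  intro x hx y hy a b ha hb hab
  have hmul {c : ℝ} {z : X} (hc : 0 ≤ c) (hz : g z ≠ ⊤) : (c : EReal) * g z ≠ ⊤ :=
    (EReal.mul_ne_top _ _).2 ⟨.inl (EReal.coe_ne_bot c), .inl (EReal.coe_nonneg.2 hc),
      .inl (EReal.coe_ne_top c), .inr hz⟩
  exact ne_top_of_le_ne_top (EReal.add_ne_top (hmul ha hx) (hmul hb hy)) (hg x y a b ha hb hab)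

lemma exists_affine_le_of_EConj_ne_top {w : X} (hw : EConj g w ≠ ⊤) :
    ∃ G : ℝ, ∀ x, ((⟪x, w⟫ - G : ℝ) : EReal) ≤ g x := by
  refine ⟨(EConj g w).toReal, fun x => ?_⟩
  have h : ((⟪x, w⟫ : ℝ) : EReal) - g x ≤ (EConj g w).toReal :=
    (le_iSup (fun x => ((⟪x, w⟫ : ℝ) : EReal) - g x) x).trans (EReal.le_coe_toReal hw)
  rw [EReal.sub_le_iff_le_add (.inr (EReal.coe_ne_top _)) (.inr (EReal.coe_ne_bot _))] at h
  rwa [EReal.coe_sub, EReal.sub_le_iff_le_add (.inl (EReal.coe_ne_bot _))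
    (.inl (EReal.coe_ne_top _)), add_comm]

lemma LinearMap.IsSymmetric.inner_map_add_smul {L : X →ₗ[ℝ] X} (hL : L.IsSymmetric)
    (a d : X) (t : ℝ) :
    ⟪L (a + t • d), a + t • d⟫ = ⟪L a, a⟫ + 2 * t * ⟪L a, d⟫ + t ^ 2 * ⟪L d, d⟫ := by
  simp only [map_add, map_smul, inner_add_left, inner_add_right, real_inner_smul_left,
    real_inner_smul_right, hL d a, real_inner_comm (L a) d]
  ring

lemma mem_ESubdiff_of_isLocalMin_add_quadratic (hg : EConvexOn g) (hbot : ∀ x, g x ≠ ⊥)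
    {L : X →ₗ[ℝ] X} (hL : L.IsSymmetric) {y p : X} (hp : g p ≠ ⊤)
    (hmin : IsLocalMin (fun x => g x + ((⟪L (x - y), x - y⟫ / 2 : ℝ) : EReal)) p) :
    -L (p - y) ∈ ESubdiff g p := by
  intro z
  rcases eq_or_ne (g z) ⊤ with hz | hz
  · exact hz ▸ le_top
  set d := z - p
  have hline : Tendsto (fun t : ℝ => p + t • d) (𝓝[>] 0) (𝓝 p) :=
    tendsto_nhdsWithin_of_tendsto_nhds
      ((continuous_const.add (continuous_id.smul continuous_const)).tendsto' _ _ (by simp))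
  lift g z to ℝ using ⟨hz, hbot z⟩ with gz hgz
  lift g p to ℝ using ⟨hp, hbot p⟩ with gp hgp
  have hev : ∀ᶠ t in 𝓝[>] (0 : ℝ), gp ≤ gz + ⟪L (p - y), d⟫ + t * (⟪L d, d⟫ / 2) := by
    filter_upwards [hline.eventually hmin, Ioc_mem_nhdsGT one_pos] with t hmin_t ⟨ht₀, ht₁⟩
    have hconv := hg p z (1 - t) t (by linarith) ht₀.le (by ring)
    rw [show (1 - t) • p + t • z = p + t • d by simp only [d, smul_sub, sub_smul, one_smul]; abel,
      ← hgp, ← hgz] at hconv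
    have h := hmin_t.trans (add_le_add hconv le_rfl)
    rw [← hgp, show p + t • d - y = (p - y) + t • d by abel, hL.inner_map_add_smul] at h
    norm_cast at h
    have : t * gp ≤ t * (gz + ⟪L (p - y), d⟫ + t * (⟪L d, d⟫ / 2)) := by linarith
    exact le_of_mul_le_mul_left this ht₀
  have hlim : Tendsto (fun t => gz + ⟪L (p - y), d⟫ + t * (⟪L d, d⟫ / 2)) (𝓝[>] 0)
      (𝓝 (gz + ⟪L (p - y), d⟫)) :=
    tendsto_nhdsWithin_of_tendsto_nhds
      ((continuous_const.add (continuous_id.mul continuous_const)).tendsto' _ _ (by simp))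
  have := ge_of_tendsto hlim hev
  norm_cast
  rw [inner_neg_right, real_inner_comm]
  linarith

lemma IsProx.apply_add_eq (hprox : IsProx g prox) {p q : X} (hp_top : g p ≠ ⊤)
    (hp_bot : g p ≠ ⊥) (hq : q ∈ ESubdiff g p) : prox (p + q) = p := by
  lift g p to ℝ using ⟨hp_top, hp_bot⟩ with gp hgp
  have h := (add_le_add (hq (prox (p + q))) le_rfl).trans (hprox (p + q) p)
  rw [← hgp] at h
  set p' := prox (p + q)
  norm_cast at h
  have hexp : ‖p' - (p + q)‖ ^ 2 = ‖p' - p‖ ^ 2 - 2 * ⟪p' - p, q⟫ + ‖q‖ ^ 2 := by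
    rw [show p' - (p + q) = (p' - p) - q by abel, norm_sub_sq_real]
  have hnq : ‖p - (p + q)‖ ^ 2 = ‖q‖ ^ 2 := by rw [sub_add_cancel_left, norm_neg]
  have : ‖p' - p‖ ^ 2 = 0 := le_antisymm (by linarith) (sq_nonneg _)
  simpa [sub_eq_zero] using this

end ExtendedConvexAnalysis

namespace Submodule

variable [NormedAddCommGroup X] [InnerProductSpace ℝ X] (U : Submodule ℝ X)
  [U.HasOrthogonalProjection]

def scaleAlong (μ : ℝ) : X →L[ℝ] X := Uᗮ.starProjection + μ • U.starProjection

variable {U}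

lemma norm_sub_starProjection_le (y : X) {u : X} (hu : u ∈ U) :
    ‖y - U.starProjection y‖ ≤ ‖y - u‖ := by
  rw [starProjection_minimal]
  exact ciInf_le ⟨0, Set.forall_mem_range.2 fun _ => norm_nonneg _⟩ (⟨u, hu⟩ : U)

lemma starProjection_reflection (x : X) :
    U.starProjection (U.reflection x) = U.starProjection x := by
  rw [reflection_apply, map_sub, map_nsmul,
    starProjection_eq_self_iff.2 (U.starProjection_apply_mem x), two_nsmul]
  abel

lemma scaleAlong_apply (μ : ℝ) (x : X) :
    U.scaleAlong μ x = x - U.starProjection x + μ • U.starProjection x := by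
  simp [scaleAlong]

lemma starProjection_scaleAlong (μ : ℝ) (x : X) :
    U.starProjection (U.scaleAlong μ x) = μ • U.starProjection x := by
  simp [scaleAlong_apply, starProjection_eq_self_iff.2 (U.starProjection_apply_mem x)]

lemma scaleAlong_scaleAlong (μ ν : ℝ) (x : X) :
    U.scaleAlong μ (U.scaleAlong ν x) = U.scaleAlong (μ * ν) x := by
  rw [scaleAlong_apply, starProjection_scaleAlong, scaleAlong_apply, scaleAlong_apply, mul_smul]
  abel

lemma isSymmetric_scaleAlong (μ : ℝ) : (U.scaleAlong μ : X →ₗ[ℝ] X).IsSymmetric := by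
  intro x y
  simp only [ContinuousLinearMap.coe_coe, scaleAlong_apply, inner_add_left, inner_add_right,
    inner_sub_left, inner_sub_right, real_inner_smul_left, real_inner_smul_right,
    inner_starProjection_left_eq_right]

lemma inner_scaleAlong_sq_self (μ : ℝ) (x : X) :
    ⟪U.scaleAlong (μ ^ 2) x, x⟫ = ‖U.scaleAlong μ x‖ ^ 2 := by
  rw [sq μ, ← scaleAlong_scaleAlong, ← real_inner_self_eq_norm_sq]
  exact isSymmetric_scaleAlong μ _ _

lemma inner_scaleAlong_of_mem_orthogonal (μ : ℝ) (x : X) {w : X} (hw : w ∈ Uᗮ) :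
    ⟪U.scaleAlong μ x, w⟫ = ⟪x, w⟫ := by
  rw [scaleAlong_apply, inner_add_left, inner_sub_left, real_inner_smul_left,
    inner_right_of_mem_orthogonal (U.starProjection_apply_mem x) hw]
  ring

lemma mul_norm_le_norm_scaleAlong {μ : ℝ} (hμ₀ : 0 ≤ μ) (hμ₁ : μ ≤ 1) (x : X) :
    μ * ‖x‖ ≤ ‖U.scaleAlong μ x‖ := by
  set xU := U.starProjection x
  have hE : ‖U.scaleAlong μ x‖ ^ 2 = ‖x - xU‖ ^ 2 + μ ^ 2 * ‖xU‖ ^ 2 := by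
    rw [scaleAlong_apply, norm_add_sq_real, real_inner_smul_right,
      inner_left_of_mem_orthogonal (U.starProjection_apply_mem x)
        (U.sub_starProjection_mem_orthogonal x),
      norm_smul, mul_pow, Real.norm_eq_abs, sq_abs]
    ring
  have hx := norm_sq_eq_add_norm_sq_starProjection x U
  rw [starProjection_orthogonal_val] at hx
  have h2 : (μ * ‖x‖) ^ 2 ≤ ‖U.scaleAlong μ x‖ ^ 2 := by
    rw [hE, mul_pow, hx]
    nlinarith [mul_nonneg (sub_nonneg.2 (pow_le_one₀ (n := 2) hμ₀ hμ₁)) (sq_nonneg ‖x - xU‖)]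
  exact (pow_le_pow_iff_left₀ (by positivity) (norm_nonneg _) two_ne_zero).1 h2

end Submodule

section GapApproximation

variable [NormedAddCommGroup X] [InnerProductSpace ℝ X] {U : Submodule ℝ X}
  [U.HasOrthogonalProjection] {g : X → EReal}

open Submodule

lemma norm_scaleAlong_sq_le_of_sublevel {w : X} {G : ℝ} (hw : w ∈ Uᗮ)
    (hG : ∀ x, ((⟪x, w⟫ - G : ℝ) : EReal) ≤ g x) {μ : ℝ} (hμ : 0 < μ) {x y : X} {gy : ℝ}
    (hx : g x + ((⟪(μ⁻¹ • U.scaleAlong (μ ^ 2)) (x - y), x - y⟫ / 2 : ℝ) : EReal) ≤ gy) :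
    ‖U.scaleAlong μ (x - y)‖ ^ 2 ≤
      μ * (2 * (gy - ⟪y, w⟫ + G) + 2 * ‖w‖ * ‖U.scaleAlong μ (x - y)‖) := by
  set e := U.scaleAlong μ (x - y)
  have h := (add_le_add (hG x) le_rfl).trans hx
  rw [smul_apply, real_inner_smul_left, inner_scaleAlong_sq_self] at h
  norm_cast at h
  have hxw : ⟪x, w⟫ = ⟪y, w⟫ + ⟪e, w⟫ := by
    rw [inner_scaleAlong_of_mem_orthogonal _ _ hw, ← inner_add_left, add_sub_cancel]
  have hew : -(‖e‖ * ‖w‖) ≤ ⟪e, w⟫ := neg_le_of_abs_le (abs_real_inner_le_norm e w)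
  have : μ⁻¹ * ‖e‖ ^ 2 ≤ 2 * (gy - ⟪y, w⟫ + G) + 2 * ‖w‖ * ‖e‖ := by linarith
  calc ‖e‖ ^ 2 = μ * (μ⁻¹ * ‖e‖ ^ 2) := by field_simp
    _ ≤ _ := mul_le_mul_of_nonneg_left this hμ.le

lemma exists_norm_starProjection_sub_prox_le [FiniteDimensional ℝ X] {prox : X → X}
    (hbot : ∀ x, g x ≠ ⊥) (hg : EConvexOn g) (hlsc : LowerSemicontinuous g)
    (hprox : IsProx g prox) {w : X} {G : ℝ} (hw : w ∈ Uᗮ)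
    (hG : ∀ x, ((⟪x, w⟫ - G : ℝ) : EReal) ≤ g x) {y : X} (hy : g y ≠ ⊤) {ε : ℝ} (hε : 0 < ε) :
    ∃ x, ‖U.starProjection x - prox x‖ ≤ ‖y - U.starProjection y‖ + ε := by
  lift g y to ℝ using ⟨hy, hbot y⟩ with gy hgy
  obtain ⟨μ, hsmall, hμ₀, hμ₁⟩ : ∃ μ : ℝ, (∀ s : ℝ,
      s ^ 2 ≤ μ * (2 * (gy - ⟪y, w⟫ + G) + 2 * ‖w‖ * s) → s ≤ ε) ∧ 0 < μ ∧ μ ≤ 1 :=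
    (((eventually_forall_sq_le_mul_add _ _ hε).filter_mono nhdsWithin_le_nhds).and
      (Ioc_mem_nhdsGT one_pos)).exists
  -- `⟪L h, h⟫ = ‖U.scaleAlong μ h‖² / μ`: stiff across `U`, soft along `U`
  set L := μ⁻¹ • U.scaleAlong (μ ^ 2)
  set F := fun x => g x + ((⟪L (x - y), x - y⟫ / 2 : ℝ) : EReal)
  have hFy : F y = gy := by simp [F, hgy]
  have hsub : ∀ x, F x ≤ F y → ‖U.scaleAlong μ (x - y)‖ ≤ ε := fun x hx =>
    hsmall _ (norm_scaleAlong_sq_le_of_sublevel hw hG hμ₀ (hFy ▸ hx))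
  have hbdd : Bornology.IsBounded {x | F x ≤ F y} :=
    (Metric.isBounded_closedBall (x := y) (r := ε / μ)).subset fun x hx => by
      rw [mem_closedBall_iff_norm, le_div_iff₀' hμ₀]
      exact (mul_norm_le_norm_scaleAlong hμ₀.le hμ₁ _).trans (hsub x hx)
  have hFlsc : LowerSemicontinuous F :=
    hlsc.add' (continuous_coe_real_ereal.comp (by fun_prop)).lowerSemicontinuous
      fun x => EReal.continuousAt_add (.inr (EReal.coe_ne_bot _)) (.inr (EReal.coe_ne_top _))
  obtain ⟨p, hp⟩ := hFlsc.exists_forall_le_of_isBounded hbdd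
  have hpdom : g p ≠ ⊤ := fun htop => by
    have h := (hp y).trans hFy.le
    simp [F, htop] at h
  have hL : (L : X →ₗ[ℝ] X).IsSymmetric := by
    rw [ContinuousLinearMap.toLinearMap_smul]
    exact (isSymmetric_scaleAlong _).smul (star_trivial _)
  have hq : -L (p - y) ∈ ESubdiff g p :=
    mem_ESubdiff_of_isLocalMin_add_quadratic hg hbot hL hpdom (.of_forall hp)
  refine ⟨p + -L (p - y), ?_⟩
  have hdisp : U.starProjection (p + -L (p - y)) - p =
      -(y - U.starProjection y) - U.scaleAlong μ (p - y) := by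
    rw [map_add, map_neg, smul_apply, map_smul, starProjection_scaleAlong,
      smul_smul, show μ⁻¹ * μ ^ 2 = μ by field_simp, scaleAlong_apply, map_sub]
    abel
  rw [hprox.apply_add_eq hpdom (hbot p) hq, hdisp, ← norm_neg (y - _)]
  exact (norm_sub_le _ _).trans (add_le_add le_rfl (hsub p (hp y)))

lemma range_sub_eq_range_starProjection_sub {T prox : X → X}
    (hT : ∀ z, T z = z - U.starProjection z + prox (U.reflection z)) :
    Set.range (fun z => z - T z) = Set.range (fun x => U.starProjection x - prox x) := by
  have hdisp (z : X) :
      z - T z = U.starProjection (U.reflection z) - prox (U.reflection z) := by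
    rw [hT, starProjection_reflection]
    abel
  ext e
  constructor
  · rintro ⟨z, rfl⟩
    exact ⟨U.reflection z, (hdisp z).symm⟩
  · rintro ⟨x, rfl⟩
    exact ⟨U.reflection x, (hdisp _).trans (by rw [reflection_reflection])⟩

end GapApproximation

/-- In finite dimensions, under the constraint qualification
`0 ∈ U^⊥ + dom g*`, the minimal displacement vector
`v = P_{closure (ran (Id − T))} 0` of the Douglas–Rachford operator
`T = Id − P_U + Prox_g ∘ R_U` equals `P_{closure (U − dom g)} 0`;
in particular `v ∈ U^⊥`. -/
theorem minimal_displacement_eq_gap_vector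
    [NormedAddCommGroup X] [InnerProductSpace ℝ X] [FiniteDimensional ℝ X]
    (U : Submodule ℝ X)
    (g : X → EReal) (hgproper : EProper g) (hglsc : LowerSemicontinuous g)
    (hgconv : EConvexOn g)
    (prox : X → X) (hprox : IsProx g prox)
    (PU RU T : X → X)
    (hPU : ∀ z, PU z = (U.orthogonalProjectionOnto z : X))
    (hRU : ∀ z, RU z = 2 • PU z - z)
    (hT : ∀ z, T z = z - PU z + prox (RU z))
    (hCQ : ∃ u w : X, u ∈ Uᗮ ∧ EConj g w ≠ ⊤ ∧ u + w = 0)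
    (v : X)
    (hv : IsMetricProj (closure (Set.range fun z => z - T z)) 0 v) :
    IsMetricProj (closure ((U : Set X) - {z | g z ≠ ⊤})) 0 v ∧ v ∈ Uᗮ := by
  obtain ⟨hbot, hdom⟩ := hgproper
  obtain ⟨u, w, hu, hw, huw⟩ := hCQ
  obtain ⟨G, hG⟩ := exists_affine_le_of_EConj_ne_top hw
  have hwU : w ∈ Uᗮ := eq_neg_of_add_eq_zero_right huw ▸ Uᗮ.neg_mem hu
  obtain rfl : PU = U.starProjection := funext hPU
  obtain rfl : RU = U.reflection := funext hRU
  rw [range_sub_eq_range_starProjection_sub hT] at hv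
  set S := (U : Set X) - {z | g z ≠ ⊤}
  have hvS : v ∈ closure S := closure_mono (Set.range_subset_iff.2 fun x =>
    Set.sub_mem_sub (U.starProjection_apply_mem x) (hprox.apply_ne_top hdom x)) hv.1
  have hnorm : ∀ s ∈ S, ‖v‖ ≤ ‖s‖ := by
    rintro _ ⟨a, ha, y, hy, rfl⟩
    refine le_of_forall_pos_le_add fun ε hε => ?_
    obtain ⟨x, hx⟩ := exists_norm_starProjection_sub_prox_le hbot hgconv hglsc hprox hwU hG hy hε
    calc ‖v‖ ≤ ‖U.starProjection x - prox x‖ := hv.norm_le (subset_closure ⟨x, rfl⟩)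
      _ ≤ ‖y - U.starProjection y‖ + ε := hx
      _ ≤ ‖a - y‖ + ε := by
        rw [norm_sub_rev a]
        gcongr
        exact U.norm_sub_starProjection_le y ha
  have hproj : IsMetricProj (closure S) 0 v :=
    isMetricProj_zero_of_forall_norm_le (U.convex.sub hgconv.convex_dom).closure hvS
      (closure_minimal hnorm (isClosed_le continuous_const continuous_norm))
  exact ⟨hproj, hproj.mem_orthogonal fun a ha s hs => add_mem_closure_submodule_sub ha hs⟩
end
end

section
/- Let X be a real Hilbert space, U a closed linear subspace of X, g : X → (−∞,+∞] proper lower semicontinuous convex, and let v ∈ U^⊥. Define Z = {x ∈ X : v ∈ N_U(x) + ∂g(x − v)}. If Z ≠ ∅, then Z = U ∩ (v + dom ∂g) ∩ argmin(ι_U + g(· − v)) = argmin(ι_U + g(· − v)); that is, Z equals the full set of minimizers of g(· − v) over U. -/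
/-!
Since `v ∈ Uᗮ`, a point `x` lies in `Z` exactly when `x ∈ U` and `∂g(x - v)` contains some
`b ∈ Uᗮ`. Such a `b` is orthogonal to every difference `(z - v) - (x - v)` with `z ∈ U`, so the
subgradient inequality makes `x` a minimizer of `g(· - v)` over `U`. Conversely, fix `x₀ ∈ Z` with
its subgradient `b₀ ∈ Uᗮ`: for any other minimizer `x`, `g(x - v) ≤ g(x₀ - v)` and `⟪·, b₀⟫` takes
the same value at `x - v` and `x₀ - v`, so `b₀` is a subgradient at `x - v` as well.
-/

open scoped RealInnerProductSpace Pointwise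
open Filter Topology

noncomputable section

variable {X : Type*}

section ESubdiff
variable [NormedAddCommGroup X] [InnerProductSpace ℝ X] {g : X → EReal} {x y : X} {b : X}

theorem le_of_mem_eSubdiff_of_inner_eq_zero (hb : b ∈ ESubdiff g x) (hxy : ⟪y - x, b⟫ = 0) :
    g x ≤ g y := by
  simpa [hxy] using hb y

theorem mem_eSubdiff_of_le_of_inner_eq_zero (hb : b ∈ ESubdiff g y) (hle : g x ≤ g y)
    (hxy : ⟪y - x, b⟫ = 0) : b ∈ ESubdiff g x := by
  intro z
  have hshift : ⟪z - x, b⟫ = ⟪z - y, b⟫ := by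
    rw [← sub_add_sub_cancel z y x, inner_add_left, hxy, add_zero]
  rw [hshift]
  exact (add_le_add_left hle _).trans (hb z)

end ESubdiff

section NormalCone
variable [NormedAddCommGroup X] [InnerProductSpace ℝ X] {U : Submodule ℝ X} {g : X → EReal}
  {v x y : X}

theorem exists_normalCone_add_eSubdiff_iff (hv : v ∈ Uᗮ) :
    (∃ a b : X, a ∈ normalCone U x ∧ b ∈ ESubdiff g y ∧ v = a + b) ↔
      x ∈ U ∧ ∃ b ∈ Uᗮ, b ∈ ESubdiff g y := by
  constructor
  · rintro ⟨a, b, ⟨hx, ha⟩, hb, rfl⟩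
    exact ⟨hx, b, by simpa using sub_mem hv ha, hb⟩
  · rintro ⟨hx, b, hbU, hb⟩
    exact ⟨v - b, b, ⟨hx, sub_mem hv hbU⟩, hb, (sub_add_cancel v b).symm⟩

theorem inner_sub_sub_eq_zero_of_mem_orthogonal {b : X} (hb : b ∈ Uᗮ) (hx : x ∈ U) (hy : y ∈ U)
    (v : X) : ⟪(y - v) - (x - v), b⟫ = 0 :=
  Submodule.inner_right_of_mem_orthogonal
    (by rw [sub_sub_sub_cancel_right]; exact sub_mem hy hx) hb

end NormalCone

theorem normal_solutions_eq_argmin_general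
    [NormedAddCommGroup X] [InnerProductSpace ℝ X]
    (U : Submodule ℝ X)
    (g : X → EReal)
    (v : X) (hv : v ∈ Uᗮ)
    (Z : Set X)
    (hZ : Z = {x | ∃ a b : X, a ∈ normalCone U x ∧ b ∈ ESubdiff g (x - v) ∧ v = a + b})
    (hZne : Z.Nonempty) :
    Z = {x | x ∈ U ∧ (ESubdiff g (x - v)).Nonempty} ∩
        {x | x ∈ U ∧ ∀ z ∈ U, g (x - v) ≤ g (z - v)} ∧
    Z = {x | x ∈ U ∧ ∀ z ∈ U, g (x - v) ≤ g (z - v)} := by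
  obtain ⟨x₀, hx₀⟩ := hZne
  rw [hZ, Set.mem_ofPred_eq, exists_normalCone_add_eSubdiff_iff hv] at hx₀
  obtain ⟨hx₀U, b₀, hb₀U, hb₀⟩ := hx₀
  have hmin_subgrad : ∀ x ∈ U, (∀ z ∈ U, g (x - v) ≤ g (z - v)) → b₀ ∈ ESubdiff g (x - v) :=
    fun x hxU hmin => mem_eSubdiff_of_le_of_inner_eq_zero hb₀ (hmin x₀ hx₀U)
      (inner_sub_sub_eq_zero_of_mem_orthogonal hb₀U hxU hx₀U v)
  have hZ_argmin : Z = {x | x ∈ U ∧ ∀ z ∈ U, g (x - v) ≤ g (z - v)} := by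
    ext x
    rw [hZ, Set.mem_ofPred_eq, exists_normalCone_add_eSubdiff_iff hv]
    constructor
    · rintro ⟨hxU, b, hbU, hb⟩
      exact ⟨hxU, fun z hz => le_of_mem_eSubdiff_of_inner_eq_zero hb
        (inner_sub_sub_eq_zero_of_mem_orthogonal hbU hxU hz v)⟩
    · rintro ⟨hxU, hmin⟩
      exact ⟨hxU, b₀, hb₀U, hmin_subgrad x hxU hmin⟩
  refine ⟨?_, hZ_argmin⟩
  rw [hZ_argmin, eq_comm, Set.inter_eq_right]
  exact fun x ⟨hxU, hmin⟩ => ⟨hxU, b₀, hmin_subgrad x hxU hmin⟩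

/-- For `v ∈ U^⊥` and `Z = {x : v ∈ N_U(x) + ∂g(x − v)}` nonempty,
`Z = U ∩ (v + dom ∂g) ∩ argmin(ι_U + g(·−v)) = argmin(ι_U + g(·−v))`. -/
theorem normal_solutions_eq_argmin
    [NormedAddCommGroup X] [InnerProductSpace ℝ X] [CompleteSpace X]
    (U : Submodule ℝ X) (hUclosed : IsClosed (U : Set X))
    (g : X → EReal) (hgproper : EProper g) (hglsc : LowerSemicontinuous g)
    (hgconv : EConvexOn g)
    (v : X) (hv : v ∈ Uᗮ)
    (Z : Set X)
    (hZ : Z = {x | ∃ a b : X, a ∈ normalCone U x ∧ b ∈ ESubdiff g (x - v) ∧ v = a + b})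
    (hZne : Z.Nonempty) :
    Z = {x | x ∈ U ∧ (ESubdiff g (x - v)).Nonempty} ∩
        {x | x ∈ U ∧ ∀ z ∈ U, g (x - v) ≤ g (z - v)} ∧
    Z = {x | x ∈ U ∧ ∀ z ∈ U, g (x - v) ≤ g (z - v)} :=
  normal_solutions_eq_argmin_general U g v hv Z hZ hZne
end
end

section
/- Let X be a real Hilbert space, U a closed linear subspace, g : X → (−∞,+∞] proper lower semicontinuous convex, T = Id − P_U + Prox_g ∘ R_U, and v = P_{closure(ran(Id−T))}(0) the minimal displacement vector; assume v ∈ U^⊥. Define Z = {x : v ∈ N_U(x) + ∂g(x − v)} and F = {x ∈ X : x = T(x + v)}, and assume Z ≠ ∅ (so F is nonempty, closed, and convex). Then Z = P_U(F) and P_U ∘ P_F = P_Z. -/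
open scoped RealInnerProductSpace Pointwise
open Filter Topology

noncomputable section

variable {X : Type*}

/-!
Since `v ∈ Uᗮ`, the equation `x = T (x + v)` says `Prox_g (R_U x - v) = P_U x - v`, i.e.
`P_U x - x ∈ ∂g (P_U x - v)`. So the generalized fixed points are exactly the points `u - b` with
`u ∈ U`, `b ∈ Uᗮ` and `b ∈ ∂g (u - v)`, which gives `Z = P_U(F)`.

For the projections, let `p ∈ F` and `b = P_U p - p`. Subgradients at two points may be exchanged
when the points differ by a vector of `U` and the subgradients by a vector of `Uᗮ`, so `b` is a
subgradient at `s - v` for every `s ∈ Z`, that is `Z - b ⊆ F`. As `b` is orthogonal to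
`Z - P_U p`, translating the variational inequality characterising `p = P_F x` by `b` yields the
one characterising `P_U p = P_Z x`.
-/

open Set Submodule

theorem EProper.exists_eq_coe {g : X → EReal} (hg : EProper g) {x : X} (hx : g x ≠ ⊤) :
    ∃ r : ℝ, g x = r :=
  ⟨_, (EReal.coe_toReal hx (hg.1 x)).symm⟩

theorem EProper.prox_ne_top [NormedAddCommGroup X] {g : X → EReal} (hg : EProper g)
    {prox : X → X} (hprox : IsProx g prox) (q : X) :
    g (prox q) ≠ ⊤ := by
  obtain ⟨x₀, hx₀⟩ := hg.2
  obtain ⟨r, hr⟩ := hg.exists_eq_coe hx₀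
  intro htop
  have h := hprox q x₀
  rw [htop, EReal.top_add_coe, top_le_iff, hr, ← EReal.coe_add] at h
  exact EReal.coe_ne_top _ h

theorem le_of_forall_mem_Ioc_le_add_mul {a b c : ℝ} (h : ∀ t ∈ Ioc (0 : ℝ) 1, a ≤ b + t * c) :
    a ≤ b := by
  have hlim : Tendsto (fun t : ℝ => b + t * c) (𝓝[>] 0) (𝓝 b) := by
    refine ((by fun_prop : Continuous fun t : ℝ ↦ b + t * c).tendsto' 0 b ?_).mono_left
      nhdsWithin_le_nhds
    simp
  exact ge_of_tendsto hlim (eventually_of_mem (Ioc_mem_nhdsGT one_pos) h)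

section ConvexAnalysis

variable [NormedAddCommGroup X] [InnerProductSpace ℝ X] {g : X → EReal}

theorem EProper.ne_top_of_mem_ESubdiff (hg : EProper g) {x b : X} (hb : b ∈ ESubdiff g x) :
    g x ≠ ⊤ := by
  obtain ⟨x₀, hx₀⟩ := hg.2
  intro htop
  have h := hb x₀
  rw [htop, EReal.top_add_coe, top_le_iff] at h
  exact hx₀ h

theorem mem_ESubdiff_of_inner_sub_eq_zero {x₁ x₂ b₁ b₂ : X} (h₁ : b₁ ∈ ESubdiff g x₁)
    (h₂ : b₂ ∈ ESubdiff g x₂) (h : ⟪x₂ - x₁, b₁ - b₂⟫ = 0) : b₂ ∈ ESubdiff g x₁ := by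
  intro w
  have hsplit : ⟪w - x₁, b₂⟫ = ⟪x₂ - x₁, b₁⟫ + ⟪w - x₂, b₂⟫ := by
    rw [inner_sub_right] at h
    rw [show w - x₁ = (w - x₂) + (x₂ - x₁) by abel, inner_add_left]
    linarith
  calc g x₁ + ⟪w - x₁, b₂⟫
      = (g x₁ + ⟪x₂ - x₁, b₁⟫) + ⟪w - x₂, b₂⟫ := by rw [hsplit, EReal.coe_add, add_assoc]
    _ ≤ g x₂ + ⟪w - x₂, b₂⟫ := add_le_add_left (h₁ x₂) _
    _ ≤ g w := h₂ w

variable {prox : X → X}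

theorem IsProx.eq_of_sub_mem_ESubdiff (hprox : IsProx g prox) (hg : EProper g) {q p : X}
    (hp : q - p ∈ ESubdiff g p) : prox q = p := by
  obtain ⟨gp, hgp⟩ := hg.exists_eq_coe (hg.ne_top_of_mem_ESubdiff hp)
  obtain ⟨gy, hgy⟩ := hg.exists_eq_coe (hg.prox_ne_top hprox q)
  have hmin := hprox q p
  have hsub := hp (prox q)
  rw [hgp, hgy] at hmin hsub
  norm_cast at hmin hsub
  rw [show prox q - q = (prox q - p) - (q - p) by abel, norm_sub_sq_real, norm_sub_rev p] at hmin
  have h0 : ‖prox q - p‖ ^ 2 ≤ 0 := by linarith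
  rw [← sub_eq_zero, ← norm_eq_zero]
  exact pow_eq_zero_iff two_ne_zero |>.mp (le_antisymm h0 (sq_nonneg _))

/-- Compare `prox q` with the point `(1 - t) • prox q + t • z` in the minimization defining it, and
divide by `t`. -/
theorem IsProx.le_add_mul_of_mem_Ioc (hprox : IsProx g prox) (hconv : EConvexOn g) {q z : X}
    {gp gz t : ℝ} (hgp : g (prox q) = gp) (hgz : g z = gz) (ht : t ∈ Ioc (0 : ℝ) 1) :
    gp ≤ gz - ⟪z - prox q, q - prox q⟫ + t * (‖z - prox q‖ ^ 2 / 2) := by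
  set p := prox q
  have hy : (1 - t) • p + t • z - q = t • (z - p) - (q - p) := by
    rw [sub_smul, one_smul, smul_sub]; abel
  have hseg : g ((1 - t) • p + t • z) ≤ ((1 - t) * gp + t * gz : ℝ) := by
    have h := hconv p z (1 - t) t (by linarith [ht.2]) ht.1.le (by ring)
    rwa [hgp, hgz, ← EReal.coe_mul, ← EReal.coe_mul, ← EReal.coe_add] at h
  have hmin : ((gp + ‖p - q‖ ^ 2 / 2 : ℝ) : EReal)
      ≤ ((1 - t) * gp + t * gz + ‖t • (z - p) - (q - p)‖ ^ 2 / 2 : ℝ) :=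
    calc ((gp + ‖p - q‖ ^ 2 / 2 : ℝ) : EReal) = g p + ((‖p - q‖ ^ 2 / 2 : ℝ) : EReal) := by
          rw [hgp, EReal.coe_add]
      _ ≤ g ((1 - t) • p + t • z) + ((‖(1 - t) • p + t • z - q‖ ^ 2 / 2 : ℝ) : EReal) :=
          hprox q _
      _ ≤ _ := by rw [hy, EReal.coe_add]; exact add_le_add_left hseg _
  rw [EReal.coe_le_coe_iff, norm_sub_sq_real (t • (z - p)), norm_smul, real_inner_smul_left,
    mul_pow, Real.norm_eq_abs, sq_abs, norm_sub_rev p] at hmin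
  have h : t * gp ≤ t * (gz - ⟪z - p, q - p⟫ + t * (‖z - p‖ ^ 2 / 2)) := by linarith
  exact le_of_mul_le_mul_left h ht.1

theorem IsProx.sub_mem_ESubdiff (hprox : IsProx g prox) (hg : EProper g) (hconv : EConvexOn g)
    (q : X) : q - prox q ∈ ESubdiff g (prox q) := by
  obtain ⟨gp, hgp⟩ := hg.exists_eq_coe (hg.prox_ne_top hprox q)
  intro z
  by_cases hz : g z = ⊤
  · simp [hz]
  obtain ⟨gz, hgz⟩ := hg.exists_eq_coe hz
  have h := le_of_forall_mem_Ioc_le_add_mul fun t ht ↦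
    hprox.le_add_mul_of_mem_Ioc hconv hgp hgz ht
  rw [hgp, hgz, ← EReal.coe_add, EReal.coe_le_coe_iff]
  linarith

theorem IsProx.eq_iff_sub_mem_ESubdiff (hprox : IsProx g prox) (hg : EProper g)
    (hconv : EConvexOn g) {q p : X} : prox q = p ↔ q - p ∈ ESubdiff g p :=
  ⟨fun h ↦ h ▸ hprox.sub_mem_ESubdiff hg hconv q, hprox.eq_of_sub_mem_ESubdiff hg⟩

end ConvexAnalysis

section MetricProj

variable [NormedAddCommGroup X] [InnerProductSpace ℝ X] {S T : Set X} {x p : X}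

theorem IsMetricProj.unique {q : X} (hp : IsMetricProj S x p) (hq : IsMetricProj S x q) :
    p = q := by
  have h₁ := hp.2 q hq.1
  have h₂ := hq.2 p hp.1
  have h : ⟪q - p, q - p⟫ = ⟪q - p, x - p⟫ + ⟪p - q, x - q⟫ := by
    simp only [inner_sub_left, inner_sub_right, real_inner_comm]
    ring
  exact (sub_eq_zero.mp (real_inner_self_nonpos.mp (by linarith))).symm

theorem IsMetricProj.add_of_sub_mem {b : X} (hp : IsMetricProj S x p) (hpb : p + b ∈ T)
    (hTS : ∀ t ∈ T, t - b ∈ S) (horth : ∀ t ∈ T, ⟪t - (p + b), b⟫ = 0) :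
    IsMetricProj T x (p + b) := by
  refine ⟨hpb, fun t ht ↦ ?_⟩
  have h := hp.2 _ (hTS t ht)
  rwa [show t - b - p = t - (p + b) by abel, show x - p = (x - (p + b)) + b by abel,
    inner_add_right, horth t ht, add_zero] at h

end MetricProj

section DouglasRachford

variable [NormedAddCommGroup X] [InnerProductSpace ℝ X]

def normalSolutions (U : Submodule ℝ X) (g : X → EReal) (v : X) : Set X :=
  {x | ∃ a b : X, a ∈ normalCone U x ∧ b ∈ ESubdiff g (x - v) ∧ v = a + b}

def douglasRachford (U : Submodule ℝ X) [U.HasOrthogonalProjection] (prox : X → X) (x : X) : X :=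
  x - U.starProjection x + prox (U.reflection x)

def generalizedFixedPoints (U : Submodule ℝ X) [U.HasOrthogonalProjection] (prox : X → X)
    (v : X) : Set X :=
  {x | x = douglasRachford U prox (x + v)}

variable {U : Submodule ℝ X} {g : X → EReal} {prox : X → X} {v : X}

theorem mem_normalSolutions_iff (hv : v ∈ Uᗮ) {x : X} :
    x ∈ normalSolutions U g v ↔ x ∈ U ∧ ∃ b ∈ Uᗮ, b ∈ ESubdiff g (x - v) := by
  constructor
  · rintro ⟨a, b, ⟨hx, ha⟩, hb, rfl⟩
    exact ⟨hx, b, by simpa using sub_mem hv ha, hb⟩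
  · rintro ⟨hx, b, hbU, hb⟩
    exact ⟨v - b, b, ⟨hx, sub_mem hv hbU⟩, hb, by abel⟩

variable [U.HasOrthogonalProjection]

theorem starProjection_sub_of_mem_orthogonal {u b : X} (hu : u ∈ U) (hb : b ∈ Uᗮ) :
    U.starProjection (u - b) = u := by
  rw [map_sub, starProjection_eq_self_iff.mpr hu, (U.starProjection_apply_eq_zero_iff).mpr hb,
    sub_zero]

theorem starProjection_sub_self_mem_orthogonal (x : X) : U.starProjection x - x ∈ Uᗮ := by
  simpa only [neg_sub] using neg_mem (U.sub_starProjection_mem_orthogonal x)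

theorem mem_generalizedFixedPoints_iff (hprox : IsProx g prox) (hg : EProper g)
    (hconv : EConvexOn g) (hv : v ∈ Uᗮ) {x : X} :
    x ∈ generalizedFixedPoints U prox v ↔
      U.starProjection x - x ∈ ESubdiff g (U.starProjection x - v) := by
  have hP : U.starProjection (x + v) = U.starProjection x := by
    rw [map_add, (U.starProjection_apply_eq_zero_iff).mpr hv, add_zero]
  have hR : U.reflection (x + v) - (U.starProjection x - v) = U.starProjection x - x := by
    rw [reflection_apply, hP, two_smul]; abel
  rw [← hR, ← hprox.eq_iff_sub_mem_ESubdiff hg hconv, generalizedFixedPoints, Set.mem_ofPred_eq,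
    douglasRachford, hP]
  constructor <;> intro h
  · linear_combination (norm := module) -h
  · linear_combination (norm := module) -h

theorem sub_mem_generalizedFixedPoints_iff (hprox : IsProx g prox) (hg : EProper g)
    (hconv : EConvexOn g) (hv : v ∈ Uᗮ) {u b : X} (hu : u ∈ U) (hb : b ∈ Uᗮ) :
    u - b ∈ generalizedFixedPoints U prox v ↔ b ∈ ESubdiff g (u - v) := by
  rw [mem_generalizedFixedPoints_iff hprox hg hconv hv, starProjection_sub_of_mem_orthogonal hu hb,
    sub_sub_cancel]

theorem normalSolutions_eq_image_generalizedFixedPoints (hprox : IsProx g prox) (hg : EProper g)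
    (hconv : EConvexOn g) (hv : v ∈ Uᗮ) :
    normalSolutions U g v = U.starProjection '' generalizedFixedPoints U prox v := by
  ext z
  constructor
  · intro hz
    obtain ⟨hzU, b, hbU, hb⟩ := (mem_normalSolutions_iff hv).1 hz
    exact ⟨z - b, (sub_mem_generalizedFixedPoints_iff hprox hg hconv hv hzU hbU).2 hb,
      starProjection_sub_of_mem_orthogonal hzU hbU⟩
  · rintro ⟨x, hx, rfl⟩
    exact (mem_normalSolutions_iff hv).2 ⟨U.starProjection_apply_mem x, _,
      starProjection_sub_self_mem_orthogonal x,
      (mem_generalizedFixedPoints_iff hprox hg hconv hv).1 hx⟩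

theorem sub_mem_generalizedFixedPoints_of_mem_normalSolutions (hprox : IsProx g prox)
    (hg : EProper g) (hconv : EConvexOn g) (hv : v ∈ Uᗮ) {x s : X}
    (hx : x ∈ generalizedFixedPoints U prox v) (hs : s ∈ normalSolutions U g v) :
    s - (U.starProjection x - x) ∈ generalizedFixedPoints U prox v := by
  obtain ⟨hsU, bs, hbsU, hbs⟩ := (mem_normalSolutions_iff hv).1 hs
  have hb := (mem_generalizedFixedPoints_iff hprox hg hconv hv).1 hx
  have hbU := starProjection_sub_self_mem_orthogonal (U := U) x
  refine (sub_mem_generalizedFixedPoints_iff hprox hg hconv hv hsU hbU).2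
    (mem_ESubdiff_of_inner_sub_eq_zero hbs hb ?_)
  rw [sub_sub_sub_cancel_right]
  exact inner_right_of_mem_orthogonal (sub_mem (U.starProjection_apply_mem x) hsU)
    (sub_mem hbsU hbU)

theorem IsMetricProj.starProjection_of_generalizedFixedPoints (hprox : IsProx g prox)
    (hg : EProper g) (hconv : EConvexOn g) (hv : v ∈ Uᗮ) {x p : X}
    (hp : IsMetricProj (generalizedFixedPoints U prox v) x p) :
    IsMetricProj (normalSolutions U g v) x (U.starProjection p) := by
  have hPp : U.starProjection p ∈ normalSolutions U g v := by
    rw [normalSolutions_eq_image_generalizedFixedPoints hprox hg hconv hv]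
    exact mem_image_of_mem _ hp.1
  have h := hp.add_of_sub_mem (b := U.starProjection p - p) (by rwa [add_sub_cancel])
    (fun s hs ↦ sub_mem_generalizedFixedPoints_of_mem_normalSolutions hprox hg hconv hv hp.1 hs)
    (fun s hs ↦ by
      rw [add_sub_cancel]
      exact inner_right_of_mem_orthogonal (sub_mem ((mem_normalSolutions_iff hv).1 hs).1
        (U.starProjection_apply_mem p)) (starProjection_sub_self_mem_orthogonal p))
  rwa [add_sub_cancel] at h

end DouglasRachford

theorem Z_eq_PU_image_F_and_proj_identity_general
    [NormedAddCommGroup X] [InnerProductSpace ℝ X]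
    (U : Submodule ℝ X) [Submodule.HasOrthogonalProjection U]
    (g : X → EReal) (hgproper : EProper g)
    (hgconv : EConvexOn g)
    (prox : X → X) (hprox : IsProx g prox)
    (PU RU T : X → X)
    (hPU : ∀ z, PU z = (U.orthogonalProjectionOnto z : X))
    (hRU : ∀ z, RU z = 2 • PU z - z)
    (hT : ∀ z, T z = z - PU z + prox (RU z))
    (v : X)
    (hvU : v ∈ Uᗮ)
    (Z : Set X)
    (hZ : Z = {x | ∃ a b : X, a ∈ normalCone U x ∧ b ∈ ESubdiff g (x - v) ∧ v = a + b})
    (F : Set X) (hF : F = {x | x = T (x + v)}) :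
    Z = PU '' F ∧
    ∀ x pF pZ : X, IsMetricProj F x pF → IsMetricProj Z x pZ → PU pF = pZ := by
  obtain rfl : PU = U.starProjection := funext hPU
  obtain rfl : T = douglasRachford U prox := funext fun z ↦ by
    rw [hT, hRU, douglasRachford, reflection_apply]
  obtain rfl : Z = normalSolutions U g v := hZ
  obtain rfl : F = generalizedFixedPoints U prox v := hF
  exact ⟨normalSolutions_eq_image_generalizedFixedPoints hprox hgproper hgconv hvU,
    fun x pF pZ hpF hpZ ↦
      (hpF.starProjection_of_generalizedFixedPoints hprox hgproper hgconv hvU).unique hpZ⟩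

/-- For the Douglas–Rachford operator `T = Id − P_U + Prox_g ∘ R_U`
with minimal displacement vector `v ∈ U^⊥`, nonempty normal solution set
`Z = {x : v ∈ N_U(x) + ∂g(x − v)}` and generalized fixed point set
`F = {x : x = T(x + v)}`, one has `Z = P_U(F)` and `P_U ∘ P_F = P_Z`. -/
theorem Z_eq_PU_image_F_and_proj_identity
    [NormedAddCommGroup X] [InnerProductSpace ℝ X] [CompleteSpace X]
    (U : Submodule ℝ X) (hUclosed : IsClosed (U : Set X)) [Submodule.HasOrthogonalProjection U]
    (g : X → EReal) (hgproper : EProper g) (hglsc : LowerSemicontinuous g)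
    (hgconv : EConvexOn g)
    (prox : X → X) (hprox : IsProx g prox)
    (PU RU T : X → X)
    (hPU : ∀ z, PU z = (U.orthogonalProjectionOnto z : X))
    (hRU : ∀ z, RU z = 2 • PU z - z)
    (hT : ∀ z, T z = z - PU z + prox (RU z))
    (v : X)
    (hv : IsMetricProj (closure (Set.range fun z => z - T z)) 0 v)
    (hvU : v ∈ Uᗮ)
    (Z : Set X)
    (hZ : Z = {x | ∃ a b : X, a ∈ normalCone U x ∧ b ∈ ESubdiff g (x - v) ∧ v = a + b})
    (hZne : Z.Nonempty)
    (F : Set X) (hF : F = {x | x = T (x + v)}) :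
    Z = PU '' F ∧
    ∀ x pF pZ : X, IsMetricProj F x pF → IsMetricProj Z x pZ → PU pF = pZ :=
  Z_eq_PU_image_F_and_proj_identity_general U g hgproper hgconv prox hprox PU RU T hPU hRU hT v hvU
    Z hZ F hF
end
end

section
/- Let X be a real Hilbert space, U a closed linear subspace, g : X → (−∞,+∞] proper lower semicontinuous convex, T = Id − P_U + Prox_g ∘ R_U, and v = P_{closure(ran(Id−T))}(0); assume v ∈ U^⊥. Let x ∈ X, let y ∈ (U − v) ∩ dom g, and let n ∈ ℕ. Then g(y) ≥ g(Prox_g(R_U T^n x)) + ⟪y − Prox_g(R_U T^n x), (P_U T^n x − v) − Prox_g(R_U T^n x)⟫ − ⟪P_{U^⊥} T^n x − P_{U^⊥} T^{n+1} x − v, P_{U^⊥}(nv + T^n x)⟫ − (n+1)⟪(Id − T)(T^n x) − v, −v⟫, and moreover the term −(n+1)⟪(Id − T)(T^n x) − v, −v⟫ is nonnegative, so the inequality also holds with this term deleted. -/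
open scoped RealInnerProductSpace Pointwise
open Filter Topology

noncomputable section

variable {X : Type*}

/-! The proximal point `p = Prox_g (R_U a)`, `a = Tⁿ x`, satisfies `R_U a - p ∈ ∂g(p)`, i.e.
`g y ≥ g p + ⟪y - p, R_U a - p⟫`. Since `p = T a - a + P_U a` and `y ∈ U - v`, the vectors
`y - p`, `P_{U^⊥} a - P_{U^⊥} (T a) - v` and `a - T a - v` differ by elements of `U`, so they
pair identically with the vectors of `U^⊥` occurring in the inequality; as `v ∈ U^⊥`, this turns
`⟪y - p, R_U a - p⟫` into exactly the claimed right-hand side. The last term has the right sign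
because `v` is the projection of `0` onto the closure of `ran (Id - T)`. -/

lemma le_of_forall_le_add_mul {a b K : ℝ} (h : ∀ t : ℝ, 0 < t → t ≤ 1 → a ≤ b + t * K) :
    a ≤ b := by
  have hlim : Tendsto (fun t : ℝ => b + t * K) (𝓝[>] 0) (𝓝 b) := by
    have : Continuous fun t : ℝ => b + t * K := by fun_prop
    simpa using (this.tendsto 0).mono_left nhdsWithin_le_nhds
  refine ge_of_tendsto hlim ?_
  filter_upwards [Ioo_mem_nhdsGT one_pos] with t ht using h t ht.1 ht.2.le

section Prox
variable [NormedAddCommGroup X] {g : X → EReal} {prox : X → X}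

lemma IsProx.ne_top (hprox : IsProx g prox) (hg : EProper g) (w : X) : g (prox w) ≠ ⊤ := by
  obtain ⟨y, hy⟩ := hg.2
  intro htop
  have h := hprox w y
  rw [htop, EReal.top_add_of_ne_bot (EReal.coe_ne_bot _), top_le_iff] at h
  exact (EReal.add_lt_top hy (EReal.coe_ne_top _)).ne h

variable [InnerProductSpace ℝ X]

lemma IsProx.sub_mem_eSubdiff (hprox : IsProx g prox) (hg : EProper g) (hconv : EConvexOn g)
    (w : X) : w - prox w ∈ ESubdiff g (prox w) := by
  intro z
  set p := prox w
  by_cases hz : g z = ⊤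
  · rw [hz]; exact le_top
  obtain ⟨gp, hgp⟩ : ∃ r : ℝ, g p = r :=
    ⟨_, (EReal.coe_toReal (hprox.ne_top hg w) (hg.1 _)).symm⟩
  obtain ⟨gz, hgz⟩ : ∃ r : ℝ, g z = r := ⟨_, (EReal.coe_toReal hz (hg.1 _)).symm⟩
  rw [hgp, hgz, ← EReal.coe_add, EReal.coe_le_coe_iff]
  refine le_of_forall_le_add_mul (K := ‖z - p‖ ^ 2 / 2) fun t ht ht1 => ?_
  -- compare `p` with the competitor `(1 - t) p + t z` in the proximal problem
  have hcomb := (hprox w ((1 - t) • p + t • z)).trans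
    (add_le_add (hconv p z (1 - t) t (by linarith) ht.le (by ring)) le_rfl)
  rw [hgp, hgz] at hcomb
  norm_cast at hcomb
  have hnorm : ‖(1 - t) • p + t • z - w‖ ^ 2 =
      ‖p - w‖ ^ 2 - 2 * t * ⟪z - p, w - p⟫ + t ^ 2 * ‖z - p‖ ^ 2 := by
    rw [show (1 - t) • p + t • z - w = (p - w) + t • (z - p) by module, norm_add_sq_real,
      inner_smul_right, norm_smul, Real.norm_of_nonneg ht.le, real_inner_comm,
      show p - w = -(w - p) by abel, inner_neg_right]
    ring
  rw [hnorm] at hcomb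
  have : t * (gp + ⟪z - p, w - p⟫) ≤ t * (gz + t * (‖z - p‖ ^ 2 / 2)) := by linarith
  exact le_of_mul_le_mul_left this ht

end Prox

section DouglasRachford
variable [NormedAddCommGroup X] [InnerProductSpace ℝ X] (U : Submodule ℝ X)

lemma inner_eq_inner_of_sub_mem_of_mem_orthogonal {x x' w : X} (h : x - x' ∈ U) (hw : w ∈ Uᗮ) :
    ⟪x, w⟫ = ⟪x', w⟫ := by
  rw [← sub_eq_zero, ← inner_sub_left]
  exact U.inner_right_of_mem_orthogonal h hw

variable [U.HasOrthogonalProjection]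

lemma douglasRachford_inner_eq {a b p r u v : X} (hr : r = 2 • U.starProjection a - a)
    (hb : b = a - U.starProjection a + p) (hu : u ∈ U) (hv : v ∈ Uᗮ) (n : ℝ) :
    ⟪u - v - p, (U.starProjection a - v) - p⟫
        - ⟪(a - U.starProjection a) - (b - U.starProjection b) - v,
            (n • v + a) - U.starProjection (n • v + a)⟫
        - (n + 1) * ⟪(a - b) - v, (0 : X) - v⟫ =
      ⟪u - v - p, r - p⟫ := by
  have hy : ∀ w ∈ Uᗮ, ⟪u - v - p, w⟫ = ⟪a - b - v, w⟫ := fun w hw =>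
    inner_eq_inner_of_sub_mem_of_mem_orthogonal U
      (by convert sub_mem hu (U.starProjection_apply_mem a) using 1; rw [hb]; abel) hw
  have hs : ∀ w ∈ Uᗮ, ⟪(a - U.starProjection a) - (b - U.starProjection b) - v, w⟫ =
      ⟪a - b - v, w⟫ := fun w hw => inner_eq_inner_of_sub_mem_of_mem_orthogonal U
    (by convert sub_mem (U.starProjection_apply_mem b) (U.starProjection_apply_mem a) using 1
        abel) hw
  have hQa : a - U.starProjection a ∈ Uᗮ := U.sub_starProjection_mem_orthogonal a
  have hsplit : (U.starProjection a - v) - p = (r - p) + ((a - U.starProjection a) - v) := by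
    rw [hr]; abel
  have hQ : (n • v + a) - U.starProjection (n • v + a) = n • v + (a - U.starProjection a) := by
    rw [map_add, map_smul, U.starProjection_apply_eq_zero_iff.mpr hv, smul_zero]; abel
  calc _ = ⟪u - v - p, r - p⟫ + ⟪a - b - v, (a - U.starProjection a) - v⟫
          - ⟪a - b - v, n • v + (a - U.starProjection a)⟫
          - (n + 1) * ⟪a - b - v, (0 : X) - v⟫ := by
        rw [hsplit, inner_add_right, hy _ (sub_mem hQa hv), hQ,
          hs _ (add_mem (Submodule.smul_mem _ n hv) hQa)]
    _ = _ := by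
        simp only [inner_sub_right, inner_add_right, inner_smul_right, inner_zero_right]
        ring

end DouglasRachford

theorem DR_function_value_inequality_general
    [NormedAddCommGroup X] [InnerProductSpace ℝ X]
    (U : Submodule ℝ X) [U.HasOrthogonalProjection]
    (g : X → EReal) (hgproper : EProper g)
    (hgconv : EConvexOn g)
    (prox : X → X) (hprox : IsProx g prox)
    (PU RU Q T : X → X)
    (hPU : ∀ z, PU z = (U.orthogonalProjectionOnto z : X))
    (hRU : ∀ z, RU z = 2 • PU z - z)
    (hQ : ∀ z, Q z = z - PU z)
    (hT : ∀ z, T z = z - PU z + prox (RU z))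
    (v : X)
    (hv : IsMetricProj (closure (Set.range fun z => z - T z)) 0 v)
    (hvU : v ∈ Uᗮ)
    (x y : X) (hyU : ∃ u ∈ U, y = u - v)
    (n : ℕ) :
    g (prox (RU (T^[n] x))) +
      (((⟪y - prox (RU (T^[n] x)), (PU (T^[n] x) - v) - prox (RU (T^[n] x))⟫
        - ⟪Q (T^[n] x) - Q (T^[n+1] x) - v, Q ((n : ℝ) • v + T^[n] x)⟫
        - ((n : ℝ) + 1) * ⟪(T^[n] x - T^[n+1] x) - v, (0 : X) - v⟫ : ℝ)) : EReal)
      ≤ g y ∧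
    (0 : ℝ) ≤ -(((n : ℝ) + 1) * ⟪(T^[n] x - T^[n+1] x) - v, (0 : X) - v⟫) ∧
    g (prox (RU (T^[n] x))) +
      (((⟪y - prox (RU (T^[n] x)), (PU (T^[n] x) - v) - prox (RU (T^[n] x))⟫
        - ⟪Q (T^[n] x) - Q (T^[n+1] x) - v, Q ((n : ℝ) • v + T^[n] x)⟫ : ℝ)) : EReal)
      ≤ g y := by
  obtain ⟨u, hu, rfl⟩ := hyU
  obtain rfl : PU = U.starProjection := funext hPU
  simp only [hQ, Function.iterate_succ_apply']
  set a := T^[n] x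
  have hgap : ⟪(a - T a) - v, (0 : X) - v⟫ ≤ 0 := hv.2 _ (subset_closure ⟨a, rfl⟩)
  have hgap_nonneg : (0 : ℝ) ≤ -(((n : ℝ) + 1) * ⟪(a - T a) - v, (0 : X) - v⟫) :=
    neg_nonneg.mpr (mul_nonpos_of_nonneg_of_nonpos (by positivity) hgap)
  have hsubgrad :
      g (prox (RU a)) + ((⟪u - v - prox (RU a), RU a - prox (RU a)⟫ : ℝ) : EReal) ≤ g (u - v) :=
    hprox.sub_mem_eSubdiff hgproper hgconv (RU a) (u - v)
  rw [← douglasRachford_inner_eq U (hRU a) (hT a) hu hvU n] at hsubgrad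
  exact ⟨hsubgrad, hgap_nonneg,
    hsubgrad.trans' (add_le_add le_rfl (EReal.coe_le_coe_iff.mpr (by linarith)))⟩

/-- The key function-value inequality along the Douglas–Rachford
iteration: for `y ∈ (U − v) ∩ dom g` and every `n`,
`g(y) ≥ g(Prox_g(R_U Tⁿx)) + ⟪y − p, (P_U Tⁿx − v) − p⟫
  − ⟪P_{U^⊥}Tⁿx − P_{U^⊥}Tⁿ⁺¹x − v, P_{U^⊥}(nv + Tⁿx)⟫
  − (n+1)⟪(Id−T)Tⁿx − v, 0 − v⟫`,
where `p = Prox_g(R_U Tⁿx)`; moreover the last subtracted term is nonpositive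
(so its negative is nonnegative), hence the inequality also holds with it deleted.
Here `Q = Id − P_U` is the projector onto `U^⊥`. -/
theorem DR_function_value_inequality
    [NormedAddCommGroup X] [InnerProductSpace ℝ X] [CompleteSpace X]
    (U : Submodule ℝ X) (hUclosed : IsClosed (U : Set X)) [U.HasOrthogonalProjection]
    (g : X → EReal) (hgproper : EProper g) (hglsc : LowerSemicontinuous g)
    (hgconv : EConvexOn g)
    (prox : X → X) (hprox : IsProx g prox)
    (PU RU Q T : X → X)
    (hPU : ∀ z, PU z = (U.orthogonalProjectionOnto z : X))
    (hRU : ∀ z, RU z = 2 • PU z - z)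
    (hQ : ∀ z, Q z = z - PU z)
    (hT : ∀ z, T z = z - PU z + prox (RU z))
    (v : X)
    (hv : IsMetricProj (closure (Set.range fun z => z - T z)) 0 v)
    (hvU : v ∈ Uᗮ)
    (x y : X) (hyU : ∃ u ∈ U, y = u - v) (hydom : g y ≠ ⊤)
    (n : ℕ) :
    g (prox (RU (T^[n] x))) +
      (((⟪y - prox (RU (T^[n] x)), (PU (T^[n] x) - v) - prox (RU (T^[n] x))⟫
        - ⟪Q (T^[n] x) - Q (T^[n+1] x) - v, Q ((n : ℝ) • v + T^[n] x)⟫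
        - ((n : ℝ) + 1) * ⟪(T^[n] x - T^[n+1] x) - v, (0 : X) - v⟫ : ℝ)) : EReal)
      ≤ g y ∧
    (0 : ℝ) ≤ -(((n : ℝ) + 1) * ⟪(T^[n] x - T^[n+1] x) - v, (0 : X) - v⟫) ∧
    g (prox (RU (T^[n] x))) +
      (((⟪y - prox (RU (T^[n] x)), (PU (T^[n] x) - v) - prox (RU (T^[n] x))⟫
        - ⟪Q (T^[n] x) - Q (T^[n+1] x) - v, Q ((n : ℝ) • v + T^[n] x)⟫ : ℝ)) : EReal)
      ≤ g y :=
  DR_function_value_inequality_general U g hgproper hgconv prox hprox PU RU Q T hPU hRU hQ hT v hv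
    hvU x y hyU n
end
end

section
/- Let X be a real Hilbert space, U a closed linear subspace, g : X → (−∞,+∞] proper lower semicontinuous convex, T = Id − P_U + Prox_g ∘ R_U, and v = P_{closure(ran(Id−T))}(0); assume v ∈ U^⊥ and that F = {x : x = T(x + v)} is nonempty. Let x ∈ X and let y ∈ (U − v) ∩ dom g. Then there exists a real sequence (ε_n) with ε_n → 0 such that for every n, g(y) ≥ g(Prox_g(R_U T^n x)) + ε_n + (n+1)⟪T^n x − T^{n+1} x − v, v⟫ ≥ g(Prox_g(R_U T^n x)) + ε_n. Moreover: the sequence (Prox_g(R_U T^n x)) is bounded and all its weak cluster points are minimizers of g over U − v; g(Prox_g(R_U T^n x)) → inf g(U − v); (n+1)⟪T^n x − T^{n+1} x − v, v⟫ → 0; and the sequence (P_U T^n x) is bounded with all its weak cluster points being minimizers of g(· − v) over U. -/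
open scoped RealInnerProductSpace Pointwise
open Filter Topology

noncomputable section

variable {X : Type*}

/-!
Firm nonexpansiveness of `T` and the fixed point `f = T(f + v)` make `‖Tⁿx + n v − f‖²` decrease
by at least `‖Tⁿx − Tⁿ⁺¹x − v‖² + 2(n+1)⟪Tⁿx − Tⁿ⁺¹x − v, v⟫`, a sum of two nonnegative terms
(the second because `v` is the minimal displacement vector). Both terms are therefore summable,
so `Tⁿx − Tⁿ⁺¹x → v`, `(n+1)⟪Tⁿx − Tⁿ⁺¹x − v, v⟫ → 0` and `Tⁿx + n v` stays bounded.
With `pₙ = Prox_g(R_U Tⁿx) = P_U Tⁿx − (Tⁿx − Tⁿ⁺¹x)`, the subgradient inequality of the prox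
tested at `u − v` (`u ∈ U`) reads `g(pₙ) + ⟪u − Tⁿ⁺¹x, Tⁿx − Tⁿ⁺¹x − v⟫ ≤ g(u − v)`. At the fixed
point this shows that `P_U f − v` minimizes `g` over `U − v`, and tested at the fixed point it
bounds `g(pₙ)` from below, which gives `g(pₙ) → min g(U − v)`. Weak cluster points are then
handled by weak lower semicontinuity of the convex lower semicontinuous `g`.
-/

section Analysis
variable [NormedAddCommGroup X] [InnerProductSpace ℝ X]

theorem tendsto_zero_of_add_le_of_nonneg {a b : ℕ → ℝ} (ha : ∀ n, 0 ≤ a n) (hb : ∀ n, 0 ≤ b n)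
    (h : ∀ n, b (n + 1) + a n ≤ b n) : Tendsto a atTop (𝓝 0) := by
  have hsum : ∀ N, ∑ i ∈ Finset.range N, a i + b N ≤ b 0 := by
    intro N
    induction N with
    | zero => simp
    | succ k ih => rw [Finset.sum_range_succ]; linarith [h k]
  exact (summable_of_sum_range_le ha fun N => by linarith [hsum N, hb N]).tendsto_atTop_zero

theorem nonpos_of_forall_le_mul {a c : ℝ} (h : ∀ t, 0 < t → t < 1 → a ≤ t * c) : a ≤ 0 := by
  have hlim : Tendsto (fun t => t * c) (𝓝[>] 0) (𝓝 0) := by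
    simpa using tendsto_nhdsWithin_of_tendsto_nhds ((continuous_mul_const c).tendsto 0)
  exact ge_of_tendsto hlim <| by
    filter_upwards [Ioo_mem_nhdsGT one_pos] with t ht using h t ht.1 ht.2

theorem tendsto_inner_zero_of_norm_le {a b : ℕ → X} {C : ℝ} (ha : ∀ n, ‖a n‖ ≤ C)
    (hb : Tendsto b atTop (𝓝 0)) : Tendsto (fun n => ⟪a n, b n⟫) atTop (𝓝 0) := by
  refine squeeze_zero_norm (fun n => (norm_inner_le_norm _ _).trans
    (mul_le_mul_of_nonneg_right (ha n) (norm_nonneg _))) ?_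
  simpa using (tendsto_norm_zero.comp hb).const_mul C

theorem EReal.tendsto_of_coe_add_le_of_add_coe_le {a : ℕ → EReal} {L : ℝ} {δ η : ℕ → ℝ}
    (hδ : Tendsto δ atTop (𝓝 0)) (hη : Tendsto η atTop (𝓝 0))
    (hlow : ∀ n, (L : EReal) + δ n ≤ a n) (hup : ∀ n, a n + η n ≤ L) :
    Tendsto a atTop (𝓝 (L : EReal)) := by
  refine tendsto_of_tendsto_of_tendsto_of_le_of_le (g := fun n => ((L + δ n : ℝ) : EReal))
    (h := fun n => ((L - η n : ℝ) : EReal)) ?_ ?_ (fun n => by exact_mod_cast hlow n) fun n => ?_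
  · exact EReal.tendsto_coe.2 (by simpa using hδ.const_add L)
  · exact EReal.tendsto_coe.2 (by simpa using hη.const_sub L)
  · show a n ≤ ((L - η n : ℝ) : EReal)
    rw [EReal.coe_sub, EReal.le_sub_iff_add_le (.inl (EReal.coe_ne_bot _))
      (.inl (EReal.coe_ne_top _))]
    exact hup n

theorem IsMetricProj.inner_sub_nonneg {S : Set X} {v s : X} (hv : IsMetricProj S 0 v)
    (hs : s ∈ S) : 0 ≤ ⟪s - v, v⟫ := by
  have h := hv.2 s hs
  rw [zero_sub, inner_neg_right] at h
  linarith

theorem mul_inner_iterate_nonneg {T : X → X} {v : X} (hv : ∀ z, 0 ≤ ⟪z - T z - v, v⟫) (x : X)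
    (n : ℕ) : 0 ≤ ((n : ℝ) + 1) * ⟪T^[n] x - T^[n + 1] x - v, v⟫ := by
  have h := hv (T^[n] x)
  rw [← Function.iterate_succ_apply' T n x] at h
  positivity

end Analysis

section WeakConvergence
variable [NormedAddCommGroup X] [InnerProductSpace ℝ X]

def WeakTendsto (s : ℕ → X) (c : X) : Prop :=
  ∀ w, Tendsto (fun n => ⟪s n, w⟫) atTop (𝓝 ⟪c, w⟫)

theorem Convex.mem_of_weakTendsto [CompleteSpace X] {S : Set X} (hS : Convex ℝ S)
    (hSc : IsClosed S) {s : ℕ → X} {c : X} (hc : WeakTendsto s c)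
    (hs : ∀ᶠ n in atTop, s n ∈ S) : c ∈ S := by
  by_contra hcS
  obtain ⟨φ, r, hφc, hφS⟩ := geometric_hahn_banach_point_closed hS hSc hcS
  have hlim : Tendsto (fun n => φ (s n)) atTop (𝓝 (φ c)) := by
    have h := hc ((InnerProductSpace.toDual ℝ X).symm φ)
    simp only [real_inner_comm ((InnerProductSpace.toDual ℝ X).symm φ),
      InnerProductSpace.toDual_symm_apply] at h
    exact h
  exact hφc.not_ge (ge_of_tendsto hlim (hs.mono fun n hn => (hφS _ hn).le))

theorem EConvexOn.convex_sublevel {g : X → EReal} (hg : EConvexOn g) (m : ℝ) :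
    Convex ℝ {z | g z ≤ m} := by
  intro x hx y hy a b ha hb hab
  calc g (a • x + b • y) ≤ a * g x + b * g y := hg x y a b ha hb hab
    _ ≤ a * (m : EReal) + b * (m : EReal) :=
      add_le_add (mul_le_mul_of_nonneg_left hx (by exact_mod_cast ha))
        (mul_le_mul_of_nonneg_left hy (by exact_mod_cast hb))
    _ = m := by norm_cast; rw [← add_mul, hab, one_mul]

theorem EConvexOn.le_of_weakTendsto [CompleteSpace X] {g : X → EReal} (hg : EConvexOn g)
    (hlsc : LowerSemicontinuous g) {s : ℕ → X} {c : X} (hc : WeakTendsto s c) {L : EReal}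
    (hL : Tendsto (fun n => g (s n)) atTop (𝓝 L)) : g c ≤ L := by
  by_contra! hLc
  obtain ⟨m, hLm, hmc⟩ := EReal.lt_iff_exists_real_btwn.1 hLc
  have hcm : c ∈ {z | g z ≤ m} := (hg.convex_sublevel m).mem_of_weakTendsto
    (hlsc.isClosed_preimage m) hc ((hL.eventually (gt_mem_nhds hLm)).mono fun _ hn => hn.le)
  exact hmc.not_ge hcm

namespace IsWeakClusterPt
variable {s t : ℕ → X} {c a : X}

theorem add_tendsto (hc : IsWeakClusterPt s c) (ht : Tendsto t atTop (𝓝 a)) :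
    IsWeakClusterPt (fun n => s n + t n) (c + a) := by
  obtain ⟨φ, hφ, hc⟩ := hc
  refine ⟨φ, hφ, fun w => ?_⟩
  simpa only [inner_add_left, Function.comp_apply] using
    (hc w).add ((ht.comp hφ.tendsto_atTop).inner tendsto_const_nhds)

theorem sub_tendsto (hc : IsWeakClusterPt s c) (ht : Tendsto t atTop (𝓝 a)) :
    IsWeakClusterPt (fun n => s n - t n) (c - a) := by
  obtain ⟨φ, hφ, hc⟩ := hc
  refine ⟨φ, hφ, fun w => ?_⟩
  simpa only [inner_sub_left, Function.comp_apply] using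
    (hc w).sub ((ht.comp hφ.tendsto_atTop).inner tendsto_const_nhds)

theorem mem (hc : IsWeakClusterPt s c) (K : Submodule ℝ X) [K.HasOrthogonalProjection]
    (hs : ∀ n, s n ∈ K) : c ∈ K := by
  obtain ⟨φ, -, hc⟩ := hc
  rw [← K.orthogonal_orthogonal, Submodule.mem_orthogonal]
  intro w hw
  rw [real_inner_comm]
  exact tendsto_nhds_unique (hc w) (by simp [Submodule.inner_right_of_mem_orthogonal (hs _) hw])

theorem le_of_tendsto [CompleteSpace X] {g : X → EReal} (hc : IsWeakClusterPt s c)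
    (hg : EConvexOn g) (hlsc : LowerSemicontinuous g) {L : EReal}
    (hL : Tendsto (fun n => g (s n)) atTop (𝓝 L)) : g c ≤ L := by
  obtain ⟨φ, hφ, hc⟩ := hc
  exact hg.le_of_weakTendsto hlsc hc (hL.comp hφ.tendsto_atTop)

end IsWeakClusterPt

end WeakConvergence

namespace IsProx
variable [NormedAddCommGroup X] {g : X → EReal} {prox : X → X}

theorem ne_top_s15 (hprox : IsProx g prox) (hg : EProper g) (w : X) : g (prox w) ≠ ⊤ := by
  obtain ⟨y, hy⟩ := hg.2
  intro h
  have hle := hprox w y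
  rw [h, EReal.top_add_coe, top_le_iff] at hle
  exact (EReal.add_lt_top hy (EReal.coe_ne_top _)).ne hle

theorem coe_toReal (hprox : IsProx g prox) (hg : EProper g) (w : X) :
    ((g (prox w)).toReal : EReal) = g (prox w) :=
  EReal.coe_toReal (hprox.ne_top_s15 hg w) (hg.1 _)

theorem sub_mem_eSubdiff_s15 [InnerProductSpace ℝ X] (hprox : IsProx g prox) (hg : EProper g)
    (hconv : EConvexOn g) (w : X) : w - prox w ∈ ESubdiff g (prox w) := by
  intro z
  rcases eq_or_ne (g z) ⊤ with hz | hz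
  · simp [hz]
  set p := prox w
  rw [← hprox.coe_toReal hg w, ← EReal.coe_toReal hz (hg.1 z), ← EReal.coe_add,
    EReal.coe_le_coe_iff]
  set a := (g p).toReal
  set b := (g z).toReal
  -- compare `p` with the points `p + t • (z - p)` of the segment `[p, z]`, then let `t → 0`
  suffices ∀ t : ℝ, 0 < t → t < 1 → a - b + ⟪z - p, w - p⟫ ≤ t * (‖z - p‖ ^ 2 / 2) by
    linarith [nonpos_of_forall_le_mul this]
  intro t ht0 ht1
  have hconv_t : g (p + t • (z - p)) ≤ ((1 - t) * a + t * b : ℝ) := by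
    calc g (p + t • (z - p)) = g ((1 - t) • p + t • z) := by congr 1; module
      _ ≤ ((1 - t : ℝ) : EReal) * g p + (t : EReal) * g z :=
        hconv p z (1 - t) t (by linarith) ht0.le (by ring)
      _ = _ := by
        rw [← hprox.coe_toReal hg w, ← EReal.coe_toReal hz (hg.1 z)]
        norm_cast
  have hmin : a + ‖p - w‖ ^ 2 / 2 ≤ (1 - t) * a + t * b + ‖p + t • (z - p) - w‖ ^ 2 / 2 := by
    have h := (hprox w (p + t • (z - p))).trans (add_le_add_left hconv_t _)
    rw [← hprox.coe_toReal hg w] at h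
    exact_mod_cast h
  have hexp : ‖p + t • (z - p) - w‖ ^ 2 =
      ‖p - w‖ ^ 2 - 2 * t * ⟪z - p, w - p⟫ + t ^ 2 * ‖z - p‖ ^ 2 := by
    rw [show p + t • (z - p) - w = (p - w) + t • (z - p) by abel, norm_add_sq_real,
      real_inner_smul_right, norm_smul, mul_pow, Real.norm_eq_abs, sq_abs, real_inner_comm,
      ← neg_sub w p, inner_neg_right]
    ring
  refine le_of_mul_le_mul_left ?_ ht0
  nlinarith

theorem norm_sub_sq_le_inner [InnerProductSpace ℝ X] (hprox : IsProx g prox) (hg : EProper g)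
    (hconv : EConvexOn g) (a b : X) : ‖prox a - prox b‖ ^ 2 ≤ ⟪prox a - prox b, a - b⟫ := by
  have ha := hprox.sub_mem_eSubdiff_s15 hg hconv a (prox b)
  have hb := hprox.sub_mem_eSubdiff_s15 hg hconv b (prox a)
  rw [← hprox.coe_toReal hg a, ← hprox.coe_toReal hg b, ← EReal.coe_add,
    EReal.coe_le_coe_iff] at ha hb
  have hsum : ⟪prox b - prox a, a - prox a⟫ + ⟪prox a - prox b, b - prox b⟫ =
      ‖prox a - prox b‖ ^ 2 - ⟪prox a - prox b, a - b⟫ := by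
    calc _ = -⟪prox a - prox b, a - prox a⟫ + ⟪prox a - prox b, b - prox b⟫ := by
          rw [← inner_neg_left, neg_sub]
      _ = ⟪prox a - prox b, (b - prox b) - (a - prox a)⟫ := by
          rw [inner_sub_right (prox a - prox b) (b - prox b)]; ring
      _ = ⟪prox a - prox b, (prox a - prox b) - (a - b)⟫ := by congr 1; abel
      _ = _ := by rw [inner_sub_right, real_inner_self_eq_norm_sq]
  linarith

end IsProx

def IsFirmlyNonexp [NormedAddCommGroup X] (T : X → X) : Prop :=
  ∀ a b, ‖T a - T b‖ ^ 2 + ‖(a - T a) - (b - T b)‖ ^ 2 ≤ ‖a - b‖ ^ 2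

namespace IsFirmlyNonexp
variable [NormedAddCommGroup X] [InnerProductSpace ℝ X] {T : X → X} {v f : X}

theorem norm_sq_iterate_succ_add_le (hT : IsFirmlyNonexp T) (hf : f = T (f + v)) (x : X)
    (n : ℕ) :
    ‖T^[n + 1] x + ((n + 1 : ℕ) : ℝ) • v - f‖ ^ 2 + (‖T^[n] x - T^[n + 1] x - v‖ ^ 2 +
      2 * ((n : ℝ) + 1) * ⟪T^[n] x - T^[n + 1] x - v, v⟫) ≤ ‖T^[n] x + (n : ℝ) • v - f‖ ^ 2 := by
  have h := hT (T^[n] x) (f + v)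
  rw [← hf, ← Function.iterate_succ_apply' T n x] at h
  set z := T^[n] x
  set z' := T^[n + 1] x
  push_cast
  have e1 : z' - f = (z' + ((n : ℝ) + 1) • v - f) - ((n : ℝ) + 1) • v := by abel
  have e2 : z - z' - (f + v - f) = z - z' - v := by abel
  have e3 : z - (f + v) = (z + (n : ℝ) • v - f) - ((n : ℝ) + 1) • v := by module
  have e4 : ⟪z + (n : ℝ) • v - f, v⟫ - ⟪z' + ((n : ℝ) + 1) • v - f, v⟫ = ⟪z - z' - v, v⟫ := by
    rw [← inner_sub_left]; congr 1; module
  rw [e1, e2, e3, norm_sub_sq_real (z' + _ - f), norm_sub_sq_real (z + _ - f),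
    real_inner_smul_right, real_inner_smul_right] at h
  linear_combination h - 2 * ((n : ℝ) + 1) * e4

variable (hT : IsFirmlyNonexp T) (hf : f = T (f + v)) (hv : ∀ z, 0 ≤ ⟪z - T z - v, v⟫)
include hT hf hv

theorem norm_iterate_add_smul_sub_le (x : X) (n : ℕ) :
    ‖T^[n] x + (n : ℝ) • v - f‖ ≤ ‖x - f‖ := by
  induction n with
  | zero => simp
  | succ n ih =>
    refine le_trans ?_ ih
    rw [← pow_le_pow_iff_left₀ (norm_nonneg _) (norm_nonneg _) two_ne_zero]
    nlinarith [hT.norm_sq_iterate_succ_add_le hf x n, mul_inner_iterate_nonneg hv x n,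
      sq_nonneg ‖T^[n] x - T^[n + 1] x - v‖]

theorem tendsto_displacement_energy (x : X) :
    Tendsto (fun n : ℕ => ‖T^[n] x - T^[n + 1] x - v‖ ^ 2 +
      2 * ((n : ℝ) + 1) * ⟪T^[n] x - T^[n + 1] x - v, v⟫) atTop (𝓝 0) := by
  refine tendsto_zero_of_add_le_of_nonneg (b := fun n : ℕ => ‖T^[n] x + (n : ℝ) • v - f‖ ^ 2)
    (fun n => ?_) (fun n => sq_nonneg _) (hT.norm_sq_iterate_succ_add_le hf x)
  rw [mul_assoc]
  exact add_nonneg (sq_nonneg _) (mul_nonneg zero_le_two (mul_inner_iterate_nonneg hv x n))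

theorem tendsto_iterate_sub_iterate_succ (x : X) :
    Tendsto (fun n => T^[n] x - T^[n + 1] x) atTop (𝓝 v) := by
  rw [tendsto_iff_norm_sub_tendsto_zero]
  refine squeeze_zero (fun n => norm_nonneg _) (fun n => ?_)
    (by simpa using (hT.tendsto_displacement_energy hf hv x).sqrt)
  rw [mul_assoc]
  exact Real.le_sqrt_of_sq_le
    (le_add_of_nonneg_right (mul_nonneg zero_le_two (mul_inner_iterate_nonneg hv x n)))

theorem tendsto_mul_inner_iterate (x : X) :
    Tendsto (fun n : ℕ => ((n : ℝ) + 1) * ⟪T^[n] x - T^[n + 1] x - v, v⟫) atTop (𝓝 0) := by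
  refine squeeze_zero (mul_inner_iterate_nonneg hv x) (fun n => ?_)
    (hT.tendsto_displacement_energy hf hv x)
  nlinarith [mul_inner_iterate_nonneg hv x n, sq_nonneg ‖T^[n] x - T^[n + 1] x - v‖]

theorem tendsto_inner_iterate (x u : X) :
    Tendsto (fun n : ℕ => ⟪u - (T^[n + 1] x + ((n : ℝ) + 1) • v), T^[n] x - T^[n + 1] x - v⟫)
      atTop (𝓝 0) := by
  refine tendsto_inner_zero_of_norm_le (C := ‖u - f‖ + ‖x - f‖) (fun n => ?_)
    (tendsto_sub_nhds_zero_iff.2 (hT.tendsto_iterate_sub_iterate_succ hf hv x))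
  have h := hT.norm_iterate_add_smul_sub_le hf hv x (n + 1)
  push_cast at h
  calc ‖u - (T^[n + 1] x + ((n : ℝ) + 1) • v)‖
      = ‖(u - f) - (T^[n + 1] x + ((n : ℝ) + 1) • v - f)‖ := by congr 1; abel
    _ ≤ ‖u - f‖ + ‖x - f‖ := (norm_sub_le _ _).trans (add_le_add_right h _)

theorem norm_starProjection_iterate_le {U : Submodule ℝ X} [U.HasOrthogonalProjection]
    (hvU : v ∈ Uᗮ) (x : X) (n : ℕ) : ‖U.starProjection (T^[n] x)‖ ≤ ‖x - f‖ + ‖f‖ := by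
  calc ‖U.starProjection (T^[n] x)‖ = ‖U.starProjection (T^[n] x + (n : ℝ) • v)‖ := by
        rw [map_add, map_smul, U.starProjection_apply_eq_zero_iff.2 hvU, smul_zero, add_zero]
    _ ≤ ‖T^[n] x + (n : ℝ) • v‖ := U.norm_starProjection_apply_le _
    _ ≤ ‖T^[n] x + (n : ℝ) • v - f‖ + ‖f‖ := norm_le_norm_sub_add _ _
    _ ≤ ‖x - f‖ + ‖f‖ := add_le_add_left (hT.norm_iterate_add_smul_sub_le hf hv x n) _

end IsFirmlyNonexp

section DouglasRachford
variable [NormedAddCommGroup X] [InnerProductSpace ℝ X]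

def drOperator (U : Submodule ℝ X) [U.HasOrthogonalProjection] (prox : X → X) (z : X) : X :=
  z - U.starProjection z + prox (U.reflection z)

variable {U : Submodule ℝ X} [U.HasOrthogonalProjection] {prox : X → X} {g : X → EReal}
  {u v f : X}

theorem prox_reflection_eq (prox : X → X) (z : X) :
    prox (U.reflection z) = U.starProjection z - (z - drOperator U prox z) := by
  simp only [drOperator]
  abel

theorem prox_reflection_iterate_eq (prox : X → X) (x : X) (n : ℕ) :
    prox (U.reflection ((drOperator U prox)^[n] x)) =
      U.starProjection ((drOperator U prox)^[n] x) -
        ((drOperator U prox)^[n] x - (drOperator U prox)^[n + 1] x) := by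
  rw [prox_reflection_eq prox, Function.iterate_succ_apply']

theorem isFirmlyNonexp_drOperator (hg : EProper g) (hconv : EConvexOn g)
    (hprox : IsProx g prox) : IsFirmlyNonexp (drOperator U prox) := by
  intro a b
  set m := prox (U.reflection a) - prox (U.reflection b)
  have hm : ‖m‖ ^ 2 ≤
      ⟪m, U.starProjection (a - b)⟫ - ⟪m, a - b - U.starProjection (a - b)⟫ := by
    have h := hprox.norm_sub_sq_le_inner hg hconv (U.reflection a) (U.reflection b)
    rwa [← map_sub U.reflection a b, U.reflection_apply (a - b), two_smul, add_sub_assoc,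
      inner_add_right, ← neg_sub (a - b), inner_neg_right, ← sub_eq_add_neg] at h
  have hT : drOperator U prox a - drOperator U prox b =
      (a - b - U.starProjection (a - b)) + m := by
    simp only [drOperator, m, map_sub]
    abel
  have hD : a - drOperator U prox a - (b - drOperator U prox b) =
      U.starProjection (a - b) - m := by
    simp only [drOperator, m, map_sub]
    abel
  have hpyth := U.norm_sq_eq_add_norm_sq_starProjection (a - b)
  rw [Submodule.starProjection_orthogonal_val] at hpyth
  rw [hT, hD, norm_add_sq_real _ m, norm_sub_sq_real _ m, hpyth]
  linarith [real_inner_comm m (U.starProjection (a - b)),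
    real_inner_comm m (a - b - U.starProjection (a - b))]

theorem inner_sub_prox_reflection_eq (hu : u ∈ U) (hv : v ∈ Uᗮ) (z : X) :
    ⟪u - v - prox (U.reflection z), U.reflection z - prox (U.reflection z)⟫ =
      ⟪u - drOperator U prox z, z - drOperator U prox z - v⟫ := by
  set P := U.starProjection
  set Tz := drOperator U prox z
  have horth : ⟪u - P z, v - (z - P z)⟫ = 0 :=
    Submodule.inner_right_of_mem_orthogonal (U.sub_mem hu (U.starProjection_apply_mem z))
      (Uᗮ.sub_mem hv (U.sub_starProjection_mem_orthogonal z))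
  rw [prox_reflection_eq prox, U.reflection_apply,
    show u - v - (P z - (z - Tz)) = (u - P z) + (z - Tz - v) by abel,
    show 2 • P z - z - (P z - (z - Tz)) = (z - Tz - v) + (v - (z - P z)) by rw [two_smul]; abel,
    show u - Tz = (u - P z) + (z - Tz - v) + (v - (z - P z)) by abel]
  simp only [inner_add_left, inner_add_right, horth]
  rw [real_inner_comm (z - Tz - v) (v - (z - P z))]
  ring

theorem prox_reflection_add_inner_le (hsub : ∀ w, w - prox w ∈ ESubdiff g (prox w))
    (hu : u ∈ U) (hv : v ∈ Uᗮ) (z : X) :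
    g (prox (U.reflection z)) + ⟪u - drOperator U prox z, z - drOperator U prox z - v⟫ ≤
      g (u - v) := by
  have h := hsub (U.reflection z) (u - v)
  rwa [inner_sub_prox_reflection_eq hu hv] at h

theorem prox_reflection_iterate_add_le (hsub : ∀ w, w - prox w ∈ ESubdiff g (prox w))
    (hu : u ∈ U) (hv : v ∈ Uᗮ) (x : X) (n : ℕ) :
    g (prox (U.reflection ((drOperator U prox)^[n] x))) +
      ((⟪u - ((drOperator U prox)^[n + 1] x + ((n : ℝ) + 1) • v),
          (drOperator U prox)^[n] x - (drOperator U prox)^[n + 1] x - v⟫ +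
        ((n : ℝ) + 1) * ⟪(drOperator U prox)^[n] x - (drOperator U prox)^[n + 1] x - v, v⟫ : ℝ) :
        EReal) ≤ g (u - v) := by
  convert prox_reflection_add_inner_le hsub hu hv ((drOperator U prox)^[n] x) using 3
  rw [← Function.iterate_succ_apply' (drOperator U prox), sub_add_eq_sub_sub, inner_sub_left,
    real_inner_smul_left, real_inner_comm v]
  ring

theorem prox_reflection_iterate_add_inner_le (hsub : ∀ w, w - prox w ∈ ESubdiff g (prox w))
    (hdisp : ∀ z, 0 ≤ ⟪z - drOperator U prox z - v, v⟫) (hu : u ∈ U) (hv : v ∈ Uᗮ) (x : X)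
    (n : ℕ) :
    g (prox (U.reflection ((drOperator U prox)^[n] x))) +
      ((⟪u - ((drOperator U prox)^[n + 1] x + ((n : ℝ) + 1) • v),
          (drOperator U prox)^[n] x - (drOperator U prox)^[n + 1] x - v⟫ : ℝ) : EReal) ≤
      g (u - v) :=
  (add_le_add_right (EReal.coe_le_coe_iff.2 (le_add_of_nonneg_right
    (mul_inner_iterate_nonneg hdisp x n))) _).trans
    (prox_reflection_iterate_add_le hsub hu hv x n)

theorem prox_reflection_of_fixed (hv : v ∈ Uᗮ) (hf : f = drOperator U prox (f + v)) :
    prox (U.reflection (f + v)) = U.starProjection f - v := by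
  rw [prox_reflection_eq prox, ← hf, map_add, U.starProjection_apply_eq_zero_iff.2 hv]
  abel

theorem isMinOn_starProjection_of_fixed (hsub : ∀ w, w - prox w ∈ ESubdiff g (prox w))
    (hv : v ∈ Uᗮ) (hf : f = drOperator U prox (f + v)) :
    IsMinOn (fun u => g (u - v)) U (U.starProjection f) := by
  refine isMinOn_iff.2 fun u hu => ?_
  have h := prox_reflection_add_inner_le hsub hu hv (f + v)
  rwa [← hf, prox_reflection_of_fixed hv hf, add_sub_cancel_left, sub_self, inner_zero_right,
    EReal.coe_zero, add_zero] at h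

theorem add_inner_le_prox_reflection (hsub : ∀ w, w - prox w ∈ ESubdiff g (prox w))
    (hv : v ∈ Uᗮ) (hf : f = drOperator U prox (f + v)) (z : X) :
    g (U.starProjection f - v) + ⟪z - drOperator U prox z - v, f - U.starProjection f⟫ ≤
      g (prox (U.reflection z)) := by
  have h := hsub (U.reflection (f + v)) (prox (U.reflection z))
  rw [prox_reflection_of_fixed hv hf] at h
  convert h using 3
  set P := U.starProjection
  have hR : U.reflection (f + v) - (P f - v) = -(f - P f) := by
    rw [U.reflection_apply, map_add, U.starProjection_apply_eq_zero_iff.2 hv, two_smul]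
    abel
  rw [hR, prox_reflection_eq prox,
    show P z - (z - drOperator U prox z) - (P f - v) =
      (P z - P f) - (z - drOperator U prox z - v) by abel,
    inner_neg_right, inner_sub_left (P z - P f),
    Submodule.inner_right_of_mem_orthogonal (U.sub_mem (U.starProjection_apply_mem z)
      (U.starProjection_apply_mem f)) (U.sub_starProjection_mem_orthogonal f)]
  ring

theorem tendsto_value_prox_reflection_iterate (hg : EProper g) (hconv : EConvexOn g)
    (hprox : IsProx g prox) (hv : v ∈ Uᗮ) (hdisp : ∀ z, 0 ≤ ⟪z - drOperator U prox z - v, v⟫)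
    (hf : f = drOperator U prox (f + v)) (x : X) :
    Tendsto (fun n => g (prox (U.reflection ((drOperator U prox)^[n] x)))) atTop
      (𝓝 (g (U.starProjection f - v))) := by
  have hsub := hprox.sub_mem_eSubdiff_s15 hg hconv
  have hT : IsFirmlyNonexp (drOperator U prox) := isFirmlyNonexp_drOperator hg hconv hprox
  have hfix := prox_reflection_of_fixed hv hf
  rw [← hfix, ← hprox.coe_toReal hg]
  refine EReal.tendsto_of_coe_add_le_of_add_coe_le (δ := fun n =>
    ⟪(drOperator U prox)^[n] x - (drOperator U prox)^[n + 1] x - v, f - U.starProjection f⟫) ?_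
    (hT.tendsto_inner_iterate hf hdisp x (U.starProjection f)) (fun n => ?_) fun n => ?_
  · have hd := tendsto_sub_nhds_zero_iff.2 (hT.tendsto_iterate_sub_iterate_succ hf hdisp x)
    simpa using hd.inner (tendsto_const_nhds (x := f - U.starProjection f))
  · rw [hprox.coe_toReal hg, hfix]
    have h := add_inner_le_prox_reflection hsub hv hf ((drOperator U prox)^[n] x)
    rwa [← Function.iterate_succ_apply' (drOperator U prox)] at h
  · rw [hprox.coe_toReal hg, hfix]
    exact prox_reflection_iterate_add_inner_le hsub hdisp (U.starProjection_apply_mem f) hv x n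

end DouglasRachford

theorem DR_function_value_limits_general
    [NormedAddCommGroup X] [InnerProductSpace ℝ X] [CompleteSpace X]
    (U : Submodule ℝ X) [U.HasOrthogonalProjection]
    (g : X → EReal) (hgproper : EProper g) (hglsc : LowerSemicontinuous g)
    (hgconv : EConvexOn g)
    (prox : X → X) (hprox : IsProx g prox)
    (PU RU T : X → X)
    (hPU : ∀ z, PU z = (U.orthogonalProjectionOnto z : X))
    (hRU : ∀ z, RU z = 2 • PU z - z)
    (hT : ∀ z, T z = z - PU z + prox (RU z))
    (v : X)
    (hv : IsMetricProj (closure (Set.range fun z => z - T z)) 0 v)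
    (hvU : v ∈ Uᗮ)
    (F : Set X) (hF : F = {z | z = T (z + v)}) (hFne : F.Nonempty)
    (x y : X) (hyU : ∃ u ∈ U, y = u - v) :
    (∃ ε : ℕ → ℝ, Tendsto ε atTop (𝓝 0) ∧
      ∀ n : ℕ,
        g (prox (RU (T^[n] x))) +
            ((ε n + ((n : ℝ) + 1) * ⟪T^[n] x - T^[n+1] x - v, v⟫ : ℝ) : EReal) ≤ g y ∧
        g (prox (RU (T^[n] x))) + ((ε n : ℝ) : EReal) ≤ g y) ∧
    (∃ M : ℝ, ∀ n : ℕ, ‖prox (RU (T^[n] x))‖ ≤ M) ∧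
    (∀ c : X, IsWeakClusterPt (fun n : ℕ => prox (RU (T^[n] x))) c →
      (∃ u ∈ U, c = u - v) ∧ ∀ u ∈ U, g c ≤ g (u - v)) ∧
    Tendsto (fun n : ℕ => g (prox (RU (T^[n] x)))) atTop
      (𝓝 (⨅ u : U, g ((u : X) - v))) ∧
    Tendsto (fun n : ℕ => ((n : ℝ) + 1) * ⟪T^[n] x - T^[n+1] x - v, v⟫) atTop (𝓝 0) ∧
    (∃ M : ℝ, ∀ n : ℕ, ‖PU (T^[n] x)‖ ≤ M) ∧
    (∀ c : X, IsWeakClusterPt (fun n : ℕ => PU (T^[n] x)) c →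
      c ∈ U ∧ ∀ u ∈ U, g (c - v) ≤ g (u - v)) := by
  obtain rfl : PU = U.starProjection := funext hPU
  obtain rfl : RU = U.reflection := funext fun z => (hRU z).trans (U.reflection_apply z).symm
  obtain rfl : T = drOperator U prox := funext hT
  rw [hF] at hFne
  obtain ⟨f, hf : f = drOperator U prox (f + v)⟩ := hFne
  obtain ⟨u₀, hu₀, rfl⟩ := hyU
  have hsub := hprox.sub_mem_eSubdiff_s15 hgproper hgconv
  have hfne : IsFirmlyNonexp (drOperator U prox) :=
    isFirmlyNonexp_drOperator hgproper hgconv hprox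
  have hdisp : ∀ z, 0 ≤ ⟪z - drOperator U prox z - v, v⟫ := fun z =>
    hv.inner_sub_nonneg (subset_closure ⟨z, rfl⟩)
  have hd := hfne.tendsto_iterate_sub_iterate_succ hf hdisp x
  have hmin := isMinOn_starProjection_of_fixed hsub hvU hf
  have hval := tendsto_value_prox_reflection_iterate hgproper hgconv hprox hvU hdisp hf x
  have hPbdd := hfne.norm_starProjection_iterate_le hf hdisp hvU x
  obtain ⟨C, hC⟩ := isBounded_iff_forall_norm_le.1 (Metric.isBounded_range_of_tendsto _ hd)
  refine ⟨⟨_, hfne.tendsto_inner_iterate hf hdisp x u₀, fun n =>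
      ⟨prox_reflection_iterate_add_le hsub hu₀ hvU x n,
        prox_reflection_iterate_add_inner_le hsub hdisp hu₀ hvU x n⟩⟩,
    ⟨‖x - f‖ + ‖f‖ + C, fun n => ?_⟩, ?_, ?_, hfne.tendsto_mul_inner_iterate hf hdisp x,
    ⟨_, hPbdd⟩, ?_⟩
  · rw [prox_reflection_iterate_eq prox]
    exact (norm_sub_le _ _).trans (add_le_add (hPbdd n) (hC _ ⟨n, rfl⟩))
  · rintro c hc
    have hcv : c + v ∈ U :=
      (hc.add_tendsto hd).mem U fun n => by simp [prox_reflection_iterate_eq]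
    exact ⟨⟨c + v, hcv, (add_sub_cancel_right c v).symm⟩, fun u hu =>
      (hc.le_of_tendsto hgconv hglsc hval).trans (hmin hu)⟩
  · convert hval using 2
    exact hmin.iInf_eq (U.starProjection_apply_mem f)
  · rintro c hc
    have hpc : IsWeakClusterPt (fun n => prox (U.reflection ((drOperator U prox)^[n] x)))
        (c - v) := by
      simpa only [prox_reflection_iterate_eq] using hc.sub_tendsto hd
    exact ⟨hc.mem U fun n => U.starProjection_apply_mem _, fun u hu =>
      (hpc.le_of_tendsto hgconv hglsc hval).trans (hmin hu)⟩

/-- Function-value analysis of the Douglas–Rachford iteration: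
for `y ∈ (U − v) ∩ dom g` there is a null real sequence `ε` with
`g(y) ≥ g(pₙ) + εₙ + (n+1)⟪Tⁿx − Tⁿ⁺¹x − v, v⟫ ≥ g(pₙ) + εₙ`, where
`pₙ = Prox_g(R_U Tⁿx)`; moreover `(pₙ)` is bounded with all weak cluster points
minimizing `g` over `U − v`, `g(pₙ) → inf g(U − v)`,
`(n+1)⟪Tⁿx − Tⁿ⁺¹x − v, v⟫ → 0`, and `(P_U Tⁿx)` is bounded with all weak
cluster points minimizing `g(· − v)` over `U`. -/
theorem DR_function_value_limits
    [NormedAddCommGroup X] [InnerProductSpace ℝ X] [CompleteSpace X]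
    (U : Submodule ℝ X) (hUclosed : IsClosed (U : Set X)) [U.HasOrthogonalProjection]
    (g : X → EReal) (hgproper : EProper g) (hglsc : LowerSemicontinuous g)
    (hgconv : EConvexOn g)
    (prox : X → X) (hprox : IsProx g prox)
    (PU RU T : X → X)
    (hPU : ∀ z, PU z = (U.orthogonalProjectionOnto z : X))
    (hRU : ∀ z, RU z = 2 • PU z - z)
    (hT : ∀ z, T z = z - PU z + prox (RU z))
    (v : X)
    (hv : IsMetricProj (closure (Set.range fun z => z - T z)) 0 v)
    (hvU : v ∈ Uᗮ)
    (F : Set X) (hF : F = {z | z = T (z + v)}) (hFne : F.Nonempty)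
    (x y : X) (hyU : ∃ u ∈ U, y = u - v) (hydom : g y ≠ ⊤) :
    (∃ ε : ℕ → ℝ, Tendsto ε atTop (𝓝 0) ∧
      ∀ n : ℕ,
        g (prox (RU (T^[n] x))) +
            ((ε n + ((n : ℝ) + 1) * ⟪T^[n] x - T^[n+1] x - v, v⟫ : ℝ) : EReal) ≤ g y ∧
        g (prox (RU (T^[n] x))) + ((ε n : ℝ) : EReal) ≤ g y) ∧
    (∃ M : ℝ, ∀ n : ℕ, ‖prox (RU (T^[n] x))‖ ≤ M) ∧
    (∀ c : X, IsWeakClusterPt (fun n : ℕ => prox (RU (T^[n] x))) c →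
      (∃ u ∈ U, c = u - v) ∧ ∀ u ∈ U, g c ≤ g (u - v)) ∧
    Tendsto (fun n : ℕ => g (prox (RU (T^[n] x)))) atTop
      (𝓝 (⨅ u : U, g ((u : X) - v))) ∧
    Tendsto (fun n : ℕ => ((n : ℝ) + 1) * ⟪T^[n] x - T^[n+1] x - v, v⟫) atTop (𝓝 0) ∧
    (∃ M : ℝ, ∀ n : ℕ, ‖PU (T^[n] x)‖ ≤ M) ∧
    (∀ c : X, IsWeakClusterPt (fun n : ℕ => PU (T^[n] x)) c →
      c ∈ U ∧ ∀ u ∈ U, g (c - v) ≤ g (u - v)) :=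
  DR_function_value_limits_general U g hgproper hglsc hgconv prox hprox PU RU T hPU hRU hT v hv hvU
    F hF hFne x y hyU
end
end
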